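/- arXiv:1304.2179 — 5 statements merged into one kernel-verified Lean document; each statement's English description precedes it below -/
import Mathlib

section
/- For every real polynomial P with P(0) = 1, there exists σ₀ > 0 such that for all σ ≥ σ₀ and all x ∈ ℝ, the function g_{P,σ}(x) = (σ/(σ+1))·(P(D)(f_σ)(x) + (1/(2σ²√(2π))) e^{-x²/(8σ²)}) is nonnegative. -/
noncomputable def gaussDensity (σ : ℝ) (x : ℝ) : ℝ :=
  (1 / (σ * Real.sqrt (2 * Real.pi))) * Real.exp (-x ^ 2 / (2 * σ ^ 2))

noncomputable def polyD (P : Polynomial ℝ) (f : ℝ → ℝ) (x : ℝ) : ℝ :=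
  ∑ i ∈ Finset.range (P.natDegree + 1), P.coeff i * iteratedDeriv i f x

noncomputable def gPσ (P : Polynomial ℝ) (σ : ℝ) (x : ℝ) : ℝ :=
  (σ / (σ + 1)) * (polyD P (gaussDensity σ) x
    + (1 / (2 * σ ^ 2 * Real.sqrt (2 * Real.pi))) * Real.exp (-x ^ 2 / (8 * σ ^ 2)))

/-! ### Auxiliary lemmas -/

lemma contDiff_gaussCore : ContDiff ℝ (⊤ : ℕ∞) (fun y : ℝ => Real.exp (-(y ^ 2 / 2))) :=
  Real.contDiff_exp.comp (((contDiff_id.pow 2).div_const 2).neg)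

lemma iteratedDeriv_cmul {f : ℝ → ℝ} (hf : ContDiff ℝ (⊤ : ℕ∞) f) (c : ℝ) (i : ℕ) (x : ℝ) :
    iteratedDeriv i (fun z => c * f z) x = c * iteratedDeriv i f x := by
  simp_rw [← iteratedDerivWithin_univ]
  exact iteratedDerivWithin_const_mul (Set.mem_univ x) uniqueDiffOn_univ c
    ((hf.of_le (mod_cast le_top)).contDiffOn.contDiffWithinAt (Set.mem_univ x))

lemma iteratedDeriv_gaussCore (i : ℕ) (t : ℝ) :
    iteratedDeriv i (fun y : ℝ => Real.exp (-(y ^ 2 / 2))) t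
      = (-1 : ℝ) ^ i * Polynomial.aeval t (Polynomial.hermite i) * Real.exp (-(t ^ 2 / 2)) := by
  rw [iteratedDeriv_eq_iterate]
  exact Polynomial.deriv_gaussian_eq_hermite_mul_gaussian i t

lemma iteratedDeriv_gaussDensity {σ : ℝ} (hσ : σ ≠ 0) (i : ℕ) (x : ℝ) :
    iteratedDeriv i (gaussDensity σ) x
      = (1 / (σ * Real.sqrt (2 * Real.pi))) *
          ((-σ⁻¹) ^ i * Polynomial.aeval (σ⁻¹ * x) (Polynomial.hermite i) *
            Real.exp (-((σ⁻¹ * x) ^ 2 / 2))) := by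
  have hg : gaussDensity σ = fun x => (1 / (σ * Real.sqrt (2 * Real.pi))) *
      (fun y : ℝ => Real.exp (-(y ^ 2 / 2))) (σ⁻¹ * x) := by
    funext y
    simp only [gaussDensity]
    have hss : -y ^ 2 / (2 * σ ^ 2) = -((σ⁻¹ * y) ^ 2 / 2) := by
      rw [mul_pow]
      field_simp
    rw [hss]
  have hcomp : ContDiff ℝ (⊤ : ℕ∞) (fun x : ℝ => Real.exp (-((σ⁻¹ * x) ^ 2 / 2))) :=
    contDiff_gaussCore.comp (contDiff_const.mul contDiff_id)
  rw [hg]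
  rw [iteratedDeriv_cmul hcomp (1 / (σ * Real.sqrt (2 * Real.pi))) i x]
  congr 1
  have := iteratedDeriv_comp_const_mul (f := fun y : ℝ => Real.exp (-(y ^ 2 / 2)))
    (n := i) (contDiff_gaussCore.of_le (mod_cast le_top)) σ⁻¹
  have h2 : iteratedDeriv i (fun x : ℝ => Real.exp (-((σ⁻¹ * x) ^ 2 / 2))) x
      = σ⁻¹ ^ i * iteratedDeriv i (fun y : ℝ => Real.exp (-(y ^ 2 / 2))) (σ⁻¹ * x) := by
    exact congrFun this x
  rw [h2, iteratedDeriv_gaussCore]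
  ring

lemma poly_abs_le_exp_sq (p : Polynomial ℝ) :
    ∃ C > 0, ∀ t : ℝ, |p.eval t| ≤ C * Real.exp (t ^ 2 / 8) := by
  refine ⟨(∑ j ∈ Finset.range (p.natDegree + 1), |p.coeff j| * (Nat.factorial j : ℝ)) * Real.exp 2 + 1,
    by positivity, fun t => ?_⟩
  have habs : |t| ≤ 2 + t ^ 2 / 8 := by nlinarith [sq_abs t, sq_nonneg (|t| - 4)]
  have hexp : Real.exp |t| ≤ Real.exp 2 * Real.exp (t ^ 2 / 8) := by
    rw [← Real.exp_add]; exact Real.exp_le_exp.2 habs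
  have hev : p.eval t = ∑ j ∈ Finset.range (p.natDegree + 1), p.coeff j * t ^ j :=
    Polynomial.eval_eq_sum_range t
  calc |p.eval t|
      ≤ ∑ j ∈ Finset.range (p.natDegree + 1), |p.coeff j * t ^ j| := by
        rw [hev]; exact Finset.abs_sum_le_sum_abs _ _
    _ ≤ ∑ j ∈ Finset.range (p.natDegree + 1),
          |p.coeff j| * ((Nat.factorial j : ℝ) * Real.exp |t|) := by
        refine Finset.sum_le_sum fun j _ => ?_
        rw [abs_mul, abs_pow]
        refine mul_le_mul_of_nonneg_left ?_ (abs_nonneg _)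
        have := Real.pow_div_factorial_le_exp |t| (abs_nonneg t) j
        rw [div_le_iff₀ (by positivity : (0:ℝ) < (Nat.factorial j : ℝ))] at this
        linarith [this]
    _ = (∑ j ∈ Finset.range (p.natDegree + 1), |p.coeff j| * (Nat.factorial j : ℝ)) * Real.exp |t| := by
        rw [Finset.sum_mul]; exact Finset.sum_congr rfl fun j _ => by ring
    _ ≤ (∑ j ∈ Finset.range (p.natDegree + 1), |p.coeff j| * (Nat.factorial j : ℝ)) *
          (Real.exp 2 * Real.exp (t ^ 2 / 8)) := by
        refine mul_le_mul_of_nonneg_left hexp ?_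
        exact Finset.sum_nonneg fun j _ => by positivity
    _ ≤ ((∑ j ∈ Finset.range (p.natDegree + 1), |p.coeff j| * (Nat.factorial j : ℝ)) * Real.exp 2 + 1) *
          Real.exp (t ^ 2 / 8) := by
        rw [add_mul, one_mul, ← mul_assoc]
        exact le_add_of_nonneg_right (Real.exp_pos _).le

theorem gPσ_nonneg (P : Polynomial ℝ) (hP : P.eval 0 = 1) :
    ∃ σ₀ > 0, ∀ σ ≥ σ₀, ∀ x : ℝ, 0 ≤ gPσ P σ x := by
  classical
  have hherm : ∀ i : ℕ, ∃ C > 0, ∀ t : ℝ,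
      |Polynomial.aeval t (Polynomial.hermite i)| ≤ C * Real.exp (t ^ 2 / 8) := by
    intro i
    obtain ⟨C, hC0, hC⟩ := poly_abs_le_exp_sq ((Polynomial.hermite i).map (algebraMap ℤ ℝ))
    refine ⟨C, hC0, fun t => ?_⟩
    rw [show (Polynomial.aeval t (Polynomial.hermite i) : ℝ)
        = ((Polynomial.hermite i).map (algebraMap ℤ ℝ)).eval t by
      rw [Polynomial.eval_map, Polynomial.aeval_def]]
    exact hC t
  choose Cf hCf0 hCf using hherm
  set n := P.natDegree with hn
  obtain ⟨C, hCdef⟩ : ∃ c : ℝ, c = 1 + ∑ i ∈ Finset.range (n + 1), |P.coeff i| * Cf i :=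
    ⟨_, rfl⟩
  have hsum_nonneg : 0 ≤ ∑ i ∈ Finset.range (n + 1), |P.coeff i| * Cf i :=
    Finset.sum_nonneg fun i _ => mul_nonneg (abs_nonneg _) (hCf0 i).le
  have hC1 : 1 ≤ C := by rw [hCdef]; linarith
  have hCpos : 0 < C := lt_of_lt_of_le one_pos hC1
  refine ⟨4 * C ^ 3, by positivity, fun σ hσ x => ?_⟩
  have hC3 : 1 ≤ C ^ 3 := one_le_pow₀ hC1
  have hσ1 : 1 ≤ σ := le_trans (by linarith) hσ
  have hσ0 : 0 < σ := lt_of_lt_of_le one_pos hσ1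
  have hσ' : σ ≠ 0 := hσ0.ne'
  obtain ⟨t, ht⟩ : ∃ t' : ℝ, t' = σ⁻¹ * x := ⟨_, rfl⟩
  have hsqrt : 0 < Real.sqrt (2 * Real.pi) := Real.sqrt_pos.2 (by positivity)
  -- the inner sum
  obtain ⟨S, hSdef⟩ : ∃ s' : ℝ, s' = ∑ i ∈ Finset.range (n + 1),
      P.coeff i * ((-σ⁻¹) ^ i * Polynomial.aeval t (Polynomial.hermite i)) := ⟨_, rfl⟩
  have hpoly : polyD P (gaussDensity σ) x
      = (1 / (σ * Real.sqrt (2 * Real.pi))) * (Real.exp (-(t ^ 2 / 2)) * S) := by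
    simp only [polyD, hSdef]
    rw [Finset.mul_sum, Finset.mul_sum]
    refine Finset.sum_congr rfl fun i _ => ?_
    rw [iteratedDeriv_gaussDensity hσ' i x, ht]
    ring
  have hx8 : -x ^ 2 / (8 * σ ^ 2) = -(t ^ 2 / 8) := by
    rw [ht]
    field_simp
  have hextra : (1 / (2 * σ ^ 2 * Real.sqrt (2 * Real.pi))) * Real.exp (-x ^ 2 / (8 * σ ^ 2))
      = (1 / (σ * Real.sqrt (2 * Real.pi))) * (σ⁻¹ / 2 * Real.exp (-(t ^ 2 / 8))) := by
    rw [hx8]; field_simp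
  -- split off the i = 0 term of S
  obtain ⟨E, hEdef⟩ : ∃ e' : ℝ, e' = ∑ i ∈ Finset.range n,
      P.coeff (i + 1) * ((-σ⁻¹) ^ (i + 1) * Polynomial.aeval t (Polynomial.hermite (i + 1))) :=
    ⟨_, rfl⟩
  have h0 : P.coeff 0 = 1 := by rwa [Polynomial.coeff_zero_eq_eval_zero]
  have hSsplit : S = 1 + E := by
    rw [hSdef, Finset.sum_range_succ']
    simp [Polynomial.hermite_zero, h0, hEdef, add_comm]
  -- bound on E
  have hE : |E| ≤ σ⁻¹ * C * Real.exp (t ^ 2 / 8) := by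
    have hinv1 : σ⁻¹ ≤ 1 := inv_le_one_of_one_le₀ hσ1
    have hinv0 : (0:ℝ) ≤ σ⁻¹ := by positivity
    rw [hEdef]
    calc |∑ i ∈ Finset.range n,
          P.coeff (i + 1) * ((-σ⁻¹) ^ (i + 1)
            * Polynomial.aeval t (Polynomial.hermite (i + 1)))|
        ≤ ∑ i ∈ Finset.range n,
          |P.coeff (i + 1) * ((-σ⁻¹) ^ (i + 1)
            * Polynomial.aeval t (Polynomial.hermite (i + 1)))| :=
            Finset.abs_sum_le_sum_abs _ _
      _ ≤ ∑ i ∈ Finset.range n,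
          |P.coeff (i + 1)| * (σ⁻¹ * (Cf (i + 1) * Real.exp (t ^ 2 / 8))) := by
          refine Finset.sum_le_sum fun i _ => ?_
          rw [abs_mul, abs_mul, abs_pow, abs_neg, abs_inv, abs_of_pos hσ0]
          refine mul_le_mul_of_nonneg_left ?_ (abs_nonneg _)
          have hp : σ⁻¹ ^ (i + 1) ≤ σ⁻¹ := by
            have := pow_le_pow_of_le_one hinv0 hinv1 (Nat.one_le_iff_ne_zero.2 (Nat.succ_ne_zero i))
            simpa using this
          exact mul_le_mul hp (hCf (i + 1) t) (abs_nonneg _) hinv0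
      _ = σ⁻¹ * Real.exp (t ^ 2 / 8) * ∑ i ∈ Finset.range n, |P.coeff (i + 1)| * Cf (i + 1) := by
          rw [Finset.mul_sum]; exact Finset.sum_congr rfl fun i _ => by ring
      _ ≤ σ⁻¹ * Real.exp (t ^ 2 / 8) * C := by
          refine mul_le_mul_of_nonneg_left ?_ (by positivity)
          have hsplit := Finset.sum_range_succ' (fun i => |P.coeff i| * Cf i) n
          have hf0 : (0:ℝ) ≤ |P.coeff 0| * Cf 0 := mul_nonneg (abs_nonneg _) (hCf0 0).le
          rw [hCdef, hsplit]
          linarith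
      _ = σ⁻¹ * C * Real.exp (t ^ 2 / 8) := by ring
  -- abbreviations for the exponentials
  obtain ⟨a, hadef⟩ : ∃ a' : ℝ, a' = Real.exp (-(t ^ 2 / 8)) := ⟨_, rfl⟩
  have ha0 : 0 < a := by rw [hadef]; exact Real.exp_pos _
  have ha1 : a ≤ 1 := by
    rw [hadef]
    exact Real.exp_le_one_iff.2 (neg_nonpos.2 (by positivity))
  have hea : Real.exp (t ^ 2 / 8) * a = 1 := by
    rw [hadef, ← Real.exp_add]; simp
  have he4 : Real.exp (-(t ^ 2 / 2)) = a ^ 4 := by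
    rw [hadef, show (-(t ^ 2 / 2)) = ((4:ℕ) : ℝ) * (-(t ^ 2 / 8)) by push_cast; ring,
      Real.exp_nat_mul]
  have hEa : |E| * a ≤ C * σ⁻¹ := by
    have := mul_le_mul_of_nonneg_right hE ha0.le
    calc |E| * a ≤ σ⁻¹ * C * Real.exp (t ^ 2 / 8) * a := this
      _ = σ⁻¹ * C * (Real.exp (t ^ 2 / 8) * a) := by ring
      _ = C * σ⁻¹ := by rw [hea]; ring
  have hs4 : 4 * C ^ 3 * σ⁻¹ ≤ 1 := by
    rw [mul_inv_le_iff₀ hσ0]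
    linarith [hσ]
  -- key claim
  have hclaim : a ^ 4 * |E| ≤ a ^ 4 + σ⁻¹ / 2 * a := by
    by_cases hcase : 2 * C * a ^ 2 ≤ 1
    · have h1 : a ^ 3 * (|E| * a) ≤ a ^ 3 * (C * σ⁻¹) :=
        mul_le_mul_of_nonneg_left hEa (by positivity)
      calc a ^ 4 * |E| = a ^ 3 * (|E| * a) := by ring
        _ ≤ a ^ 3 * (C * σ⁻¹) := h1
        _ = (2 * C * a ^ 2) * (σ⁻¹ / 2 * a) := by ring
        _ ≤ 1 * (σ⁻¹ / 2 * a) := mul_le_mul_of_nonneg_right hcase (by positivity)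
        _ = σ⁻¹ / 2 * a := one_mul _
        _ ≤ a ^ 4 + σ⁻¹ / 2 * a := le_add_of_nonneg_left (by positivity)
    · push_neg at hcase
      have h1 : a ^ 3 * (|E| * a) ≤ a ^ 3 * (C * σ⁻¹) :=
        mul_le_mul_of_nonneg_left hEa (by positivity)
      have ha3 : a ^ 3 ≤ 1 := pow_le_one₀ ha0.le ha1
      have h2 : a ^ 3 * (C * σ⁻¹) ≤ C * σ⁻¹ :=
        mul_le_of_le_one_left (by positivity) ha3
      have h3 : C * σ⁻¹ ≤ 1 / (4 * C ^ 2) := by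
        rw [le_div_iff₀ (by positivity)]
        calc C * σ⁻¹ * (4 * C ^ 2) = 4 * C ^ 3 * σ⁻¹ := by ring
          _ ≤ 1 := hs4
      have h4 : 1 / (4 * C ^ 2) ≤ a ^ 4 := by
        rw [div_le_iff₀ (by positivity)]
        have hu : (1:ℝ) < (2 * C * a ^ 2) * (2 * C * a ^ 2) := by nlinarith [hcase]
        calc (1:ℝ) ≤ (2 * C * a ^ 2) * (2 * C * a ^ 2) := hu.le
          _ = a ^ 4 * (4 * C ^ 2) := by ring
      have hsa2 : (0:ℝ) ≤ σ⁻¹ / 2 * a := by positivity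
      calc a ^ 4 * |E| = a ^ 3 * (|E| * a) := by ring
        _ ≤ a ^ 3 * (C * σ⁻¹) := h1
        _ ≤ C * σ⁻¹ := h2
        _ ≤ 1 / (4 * C ^ 2) := h3
        _ ≤ a ^ 4 := h4
        _ ≤ a ^ 4 + σ⁻¹ / 2 * a := le_add_of_nonneg_right hsa2
  -- final assembly
  have hkey : 0 ≤ Real.exp (-(t ^ 2 / 2)) * S + σ⁻¹ / 2 * Real.exp (-(t ^ 2 / 8)) := by
    rw [he4, hSsplit, ← hadef]
    have hfin : -(a ^ 4 * |E|) ≤ a ^ 4 * E := by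
      calc -(a ^ 4 * |E|) = a ^ 4 * (-|E|) := by ring
        _ ≤ a ^ 4 * E := mul_le_mul_of_nonneg_left (neg_abs_le E) (by positivity)
    have hexpand : a ^ 4 * (1 + E) = a ^ 4 + a ^ 4 * E := by ring
    rw [hexpand]
    linarith [hclaim, hfin]
  have : gPσ P σ x = (σ / (σ + 1)) * ((1 / (σ * Real.sqrt (2 * Real.pi))) *
      (Real.exp (-(t ^ 2 / 2)) * S + σ⁻¹ / 2 * Real.exp (-(t ^ 2 / 8)))) := by
    simp only [gPσ]
    rw [hpoly, hextra, ← mul_add]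
  rw [this]
  have hfrac : 0 ≤ σ / (σ + 1) := by positivity
  have hc : 0 ≤ 1 / (σ * Real.sqrt (2 * Real.pi)) := by positivity
  exact mul_nonneg hfrac (mul_nonneg hc hkey)
end

section
/- Let S be the set of continuous functions φ: ℝ → ℂ with φ(0) = 1 and φ(-λ) = conj(φ(λ)) for all λ, and let S₀ be the set of functions of the form λ ↦ E[e^{iλX}]·e^{-imλ + σ²λ²/2} for some real random variable X and parameters m ∈ ℝ, σ ≥ 0. Then S₀ is dense in S for the topology of uniform convergence on compact sets. -/
/-!
Write `φ λ = G λ * conj (G (-λ))` with `G λ = φ (max λ 0)` and approximate `G` on a compact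
interval by a trigonometric polynomial `S λ = ∑ c_k e^{i t_k λ}` (Stone–Weierstrass), so that
`φ λ ≈ S λ * conj (S (-λ)) = ∑_{k,l} c_k c̄_l e^{i (t_k + t_l) λ}`. Damping the `(k, l)` term by
`e^{-(t_k - t_l)² / (2τ²)}` changes this uniformly little once `τ` is large, and the damped sum
`N_τ λ` times `e^{-τ²λ²/2}` is, up to a positive constant, the Fourier transform of `|f|²` for the
Gaussian wave packet `f x = ∑ c_k e^{-(x - 2 t_k)² / (4τ²)}`. Normalising `|f|² dx` to a
probability measure `μ` gives `N_τ λ / N_τ 0 = E_μ[e^{iλX}] e^{τ²λ²/2}`, an element of `S₀` with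
`m = 0` and `σ = τ`.
-/

open Complex MeasureTheory Real Filter Topology ComplexConjugate

noncomputable section

variable {ι : Type*} [Fintype ι]

def trigPoly (c : ι → ℂ) (t : ι → ℝ) (lam : ℝ) : ℂ := ∑ k, c k * cexp (I * t k * lam)

def dampedAutocorr (c : ι → ℂ) (t : ι → ℝ) (τ lam : ℝ) : ℂ :=
  ∑ k, ∑ l, c k * conj (c l) * rexp (-(t k - t l) ^ 2 / (2 * τ ^ 2)) *
    cexp (I * (t k + t l) * lam)

-- Centred at `2 s`, so that the product of the bumps at `2 s` and `2 u` is a Gaussian centred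
-- at `s + u` with variance `τ²`.
def gaussBump (τ s x : ℝ) : ℝ := rexp (-(x - 2 * s) ^ 2 / (4 * τ ^ 2))

def gaussPacket (c : ι → ℂ) (t : ι → ℝ) (τ x : ℝ) : ℂ := ∑ k, c k * gaussBump τ (t k) x

lemma exists_cexp_ne {x y : ℝ} (h : x ≠ y) : ∃ t : ℝ, cexp (I * t * x) ≠ cexp (I * t * y) := by
  refine ⟨π / (x - y), fun heq => Complex.exp_ne_zero (I * (π / (x - y) : ℝ) * y) ?_⟩
  have hshift : I * (π / (x - y) : ℝ) * x = I * (π / (x - y) : ℝ) * y + π * I := by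
    have : (x : ℂ) - y ≠ 0 := sub_ne_zero.2 (ofReal_injective.ne h)
    push_cast
    field_simp
    ring
  rw [hshift, Complex.exp_add, exp_pi_mul_I] at heq
  linear_combination (-1 / 2 : ℂ) * heq

lemma mem_span_range_of_mem_starAlgebra_adjoin_range {R A M : Type*} [CommSemiring R] [StarRing R]
    [Semiring A] [StarRing A] [Algebra R A] [StarModule R A] [Monoid M] {e : M →* A}
    (he : star (Set.range e) ⊆ Set.range e) {a : A} (ha : a ∈ StarAlgebra.adjoin R (Set.range e)) :
    a ∈ Submodule.span R (Set.range e) := by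
  rwa [← StarSubalgebra.mem_toSubalgebra, StarAlgebra.adjoin_toSubalgebra, Set.union_eq_left.2 he,
    ← Subalgebra.mem_toSubmodule, Algebra.adjoin_eq_span, MonoidHom.mclosure_range,
    MonoidHom.coe_mrange] at ha

lemma exists_trigPoly_near {K : Set ℝ} (hK : IsCompact K) {G : ℝ → ℂ} (hG : ContinuousOn G K)
    {ε : ℝ} (hε : 0 < ε) :
    ∃ (n : ℕ) (c : Fin n → ℂ) (t : Fin n → ℝ), ∀ lam ∈ K, ‖trigPoly c t lam - G lam‖ < ε := by
  have := isCompact_iff_compactSpace.mp hK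
  let e : Multiplicative ℝ →* C(K, ℂ) :=
    { toFun := fun t => ⟨fun x => cexp (I * t.toAdd * x), by fun_prop⟩
      map_one' := by ext; simp
      map_mul' := fun s t => by ext; simp [← Complex.exp_add]; ring_nf }
  have hstar : star (Set.range e) ⊆ Set.range e := by
    rintro a ⟨t, ht⟩
    refine ⟨t⁻¹, ?_⟩
    rw [← star_star a, ← ht]
    ext x
    simp [e, ← Complex.exp_conj]
  have hsep : (StarAlgebra.adjoin ℂ (Set.range e)).SeparatesPoints := by
    intro x y hxy
    obtain ⟨t, ht⟩ := exists_cexp_ne (Subtype.coe_injective.ne hxy)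
    exact ⟨_, ⟨e (.ofAdd t), StarAlgebra.subset_adjoin _ _ ⟨_, rfl⟩, rfl⟩, ht⟩
  let GK : C(K, ℂ) := ⟨K.domRestrict G, hG.domRestrict⟩
  have hGK : GK ∈ (StarAlgebra.adjoin ℂ (Set.range e)).topologicalClosure := by
    rw [ContinuousMap.starSubalgebra_topologicalClosure_eq_top_of_separatesPoints _ hsep]
    exact StarSubalgebra.mem_top
  obtain ⟨g, hgA, hg⟩ := Metric.mem_closure_iff.1 hGK ε hε
  obtain ⟨n, c, v, rfl⟩ :=
    Submodule.mem_span_set'.1 (mem_span_range_of_mem_starAlgebra_adjoin_range hstar hgA)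
  choose t ht using fun i => (v i).2
  refine ⟨n, c, fun i => (t i).toAdd, fun lam hlam => ?_⟩
  have hdist := (ContinuousMap.dist_apply_le_dist ⟨lam, hlam⟩).trans_lt hg
  rw [dist_comm, dist_eq_norm] at hdist
  have hval : (∑ i, c i • (v i : C(K, ℂ))) ⟨lam, hlam⟩ = trigPoly c (fun i => (t i).toAdd) lam := by
    simp [trigPoly, ← ht, e]
  rwa [hval] at hdist

section Damping

variable (c : ι → ℂ) (t : ι → ℝ)

lemma trigPoly_mul_conj_trigPoly_neg (lam : ℝ) :
    trigPoly c t lam * conj (trigPoly c t (-lam)) =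
      ∑ k, ∑ l, c k * conj (c l) * cexp (I * (t k + t l) * lam) := by
  simp only [trigPoly, map_sum, map_mul, ← Complex.exp_conj, conj_I, conj_ofReal]
  rw [Finset.sum_mul_sum]
  refine Finset.sum_congr rfl fun k _ => Finset.sum_congr rfl fun l _ => ?_
  rw [mul_mul_mul_comm, ← Complex.exp_add]
  push_cast
  ring_nf

lemma norm_dampedAutocorr_sub_trigPoly_mul_conj_le (τ lam : ℝ) :
    ‖dampedAutocorr c t τ lam - trigPoly c t lam * conj (trigPoly c t (-lam))‖ ≤
      ∑ k, ∑ l, ‖c k‖ * ‖c l‖ * (1 - rexp (-(t k - t l) ^ 2 / (2 * τ ^ 2))) := by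
  rw [trigPoly_mul_conj_trigPoly_neg, dampedAutocorr, ← Finset.sum_sub_distrib]
  refine (norm_sum_le _ _).trans (Finset.sum_le_sum fun k _ => ?_)
  rw [← Finset.sum_sub_distrib]
  refine (norm_sum_le _ _).trans (Finset.sum_le_sum fun l _ => le_of_eq ?_)
  have hdamp : rexp (-(t k - t l) ^ 2 / (2 * τ ^ 2)) ≤ 1 :=
    Real.exp_le_one_iff.2 (div_nonpos_of_nonpos_of_nonneg (by nlinarith) (by positivity))
  rw [show ∀ a r e : ℂ, a * r * e - a * e = a * (r - 1) * e by intros; ring]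
  rw [norm_mul, norm_mul, norm_mul, norm_exp, ← ofReal_one, ← ofReal_sub, norm_real,
    Real.norm_of_nonpos (sub_nonpos.2 hdamp), Complex.norm_conj]
  simp

lemma tendstoUniformly_dampedAutocorr :
    TendstoUniformly (dampedAutocorr c t) (fun lam => trigPoly c t lam * conj (trigPoly c t (-lam)))
      atTop := by
  have hsq : Tendsto (fun τ : ℝ => 2 * τ ^ 2) atTop atTop :=
    (tendsto_pow_atTop two_ne_zero).const_mul_atTop two_pos
  have hexp (a : ℝ) : Tendsto (fun τ : ℝ => rexp (a / (2 * τ ^ 2))) atTop (𝓝 1) :=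
    Real.tendsto_exp_nhds_zero_nhds_one.comp (tendsto_const_nhds.div_atTop hsq)
  have hbound : Tendsto (fun τ : ℝ =>
      ∑ k, ∑ l, ‖c k‖ * ‖c l‖ * (1 - rexp (-(t k - t l) ^ 2 / (2 * τ ^ 2)))) atTop (𝓝 0) := by
    simpa using tendsto_finsetSum _ fun k _ => tendsto_finsetSum _ fun l _ =>
      ((hexp _).const_sub 1).const_mul (‖c k‖ * ‖c l‖)
  rw [Metric.tendstoUniformly_iff]
  intro ε hε
  filter_upwards [hbound.eventually (gt_mem_nhds hε)] with τ hτ lam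
  rw [dist_comm, dist_eq_norm]
  exact (norm_dampedAutocorr_sub_trigPoly_mul_conj_le c t τ lam).trans_lt hτ

end Damping

section GaussBump

variable {τ : ℝ} (s u lam : ℝ)

lemma cexp_mul_gaussBump_mul_gaussBump (x : ℝ) :
    cexp (I * lam * x) * (gaussBump τ s x * gaussBump τ u x : ℝ) =
      cexp (-(1 / (2 * τ ^ 2)) * x ^ 2 + (I * lam + (s + u) / τ ^ 2) * x +
        -(s ^ 2 + u ^ 2) / τ ^ 2) := by
  simp only [gaussBump, ofReal_mul, ofReal_exp, ← Complex.exp_add]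
  congr 1
  push_cast
  ring

variable (hτ : τ ≠ 0)
include hτ

lemma re_neg_one_div_two_mul_sq_lt_zero : (-(1 / (2 * τ ^ 2)) : ℂ).re < 0 := by
  have : (0 : ℝ) < 1 / (2 * τ ^ 2) := by positivity
  simpa [← ofReal_pow, ← ofReal_ofNat, ← ofReal_mul, ← ofReal_one, ← ofReal_div] using this

lemma integrable_cexp_mul_gaussBump_mul_gaussBump :
    Integrable fun x : ℝ => cexp (I * lam * x) * (gaussBump τ s x * gaussBump τ u x : ℝ) := by
  simp_rw [cexp_mul_gaussBump_mul_gaussBump]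
  exact integrable_cexp_quadratic' (re_neg_one_div_two_mul_sq_lt_zero hτ) _ _

lemma integral_cexp_mul_gaussBump_mul_gaussBump :
    ∫ x : ℝ, cexp (I * lam * x) * (gaussBump τ s x * gaussBump τ u x : ℝ) =
      √(2 * π * τ ^ 2) * rexp (-(τ ^ 2 * lam ^ 2) / 2) *
        (rexp (-(s - u) ^ 2 / (2 * τ ^ 2)) * cexp (I * (s + u) * lam)) := by
  simp_rw [cexp_mul_gaussBump_mul_gaussBump]
  rw [integral_cexp_quadratic (re_neg_one_div_two_mul_sq_lt_zero hτ)]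
  have hconst : (π / -(-(1 / (2 * τ ^ 2))) : ℂ) ^ (1 / 2 : ℂ) = √(2 * π * τ ^ 2) := by
    rw [Real.sqrt_eq_rpow, ofReal_cpow (by positivity)]
    push_cast
    congr 1
    field_simp
  rw [hconst, ofReal_exp, ofReal_exp, ← Complex.exp_add, mul_assoc ((√(2 * π * τ ^ 2) : ℝ) : ℂ),
    ← Complex.exp_add]
  congr 2
  have hτ' : (τ : ℂ) ≠ 0 := ofReal_ne_zero.2 hτ
  push_cast
  field_simp
  ring_nf
  simp only [I_sq]
  ring

end GaussBump

section GaussPacket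

variable (c : ι → ℂ) (t : ι → ℝ) (τ lam : ℝ)

lemma cexp_mul_gaussPacket_mul_conj (x : ℝ) :
    cexp (I * lam * x) * (gaussPacket c t τ x * conj (gaussPacket c t τ x)) =
      ∑ k, ∑ l, c k * conj (c l) *
        (cexp (I * lam * x) * (gaussBump τ (t k) x * gaussBump τ (t l) x : ℝ)) := by
  simp only [gaussPacket, map_sum, map_mul, conj_ofReal]
  rw [Finset.sum_mul_sum, Finset.mul_sum]
  refine Finset.sum_congr rfl fun k _ => ?_
  rw [Finset.mul_sum]
  refine Finset.sum_congr rfl fun l _ => ?_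
  push_cast
  ring

def packetMeasure : Measure ℝ :=
  volume.withDensity fun x => ENNReal.ofReal (‖gaussPacket c t τ x‖ ^ 2)

variable {τ} (hτ : τ ≠ 0)
include hτ

lemma integrable_cexp_mul_gaussPacket_mul_conj :
    Integrable fun x : ℝ =>
      cexp (I * lam * x) * (gaussPacket c t τ x * conj (gaussPacket c t τ x)) := by
  simp_rw [cexp_mul_gaussPacket_mul_conj]
  exact integrable_finsetSum _ fun k _ => integrable_finsetSum _ fun l _ =>
    (integrable_cexp_mul_gaussBump_mul_gaussBump _ _ _ hτ).const_mul _

lemma integral_cexp_mul_gaussPacket_mul_conj :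
    ∫ x : ℝ, cexp (I * lam * x) * (gaussPacket c t τ x * conj (gaussPacket c t τ x)) =
      √(2 * π * τ ^ 2) * rexp (-(τ ^ 2 * lam ^ 2) / 2) * dampedAutocorr c t τ lam := by
  have hint (k l : ι) := (integrable_cexp_mul_gaussBump_mul_gaussBump (t k) (t l) lam hτ).const_mul
    (c k * conj (c l))
  simp_rw [cexp_mul_gaussPacket_mul_conj]
  rw [integral_finsetSum _ fun k _ => integrable_finsetSum _ fun l _ => hint k l]
  simp_rw [integral_finsetSum _ fun l _ => hint _ l, integral_const_mul,
    integral_cexp_mul_gaussBump_mul_gaussBump _ _ _ hτ, dampedAutocorr, Finset.mul_sum]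
  refine Finset.sum_congr rfl fun k _ => Finset.sum_congr rfl fun l _ => ?_
  ring

lemma isFiniteMeasure_packetMeasure : IsFiniteMeasure (packetMeasure c t τ) := by
  refine isFiniteMeasure_withDensity_ofReal ?_
  simpa [mul_conj'] using (integrable_cexp_mul_gaussPacket_mul_conj c t 0 hτ).hasFiniteIntegral.norm

lemma charFun_packetMeasure :
    charFun (packetMeasure c t τ) lam =
      √(2 * π * τ ^ 2) * rexp (-(τ ^ 2 * lam ^ 2) / 2) * dampedAutocorr c t τ lam := by
  have hmeas : Measurable fun x => ENNReal.ofReal (‖gaussPacket c t τ x‖ ^ 2) := by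
    unfold gaussPacket gaussBump; fun_prop
  rw [charFun_apply_real, packetMeasure,
    integral_withDensity_eq_integral_toReal_smul hmeas (by simp),
    ← integral_cexp_mul_gaussPacket_mul_conj c t lam hτ]
  congr 1 with x
  rw [ENNReal.toReal_ofReal (by positivity), mul_conj', real_smul]
  push_cast
  ring_nf

end GaussPacket

lemma charFun_inv_univ_smul {E : Type*} [SeminormedAddCommGroup E] [InnerProductSpace ℝ E]
    [MeasurableSpace E] (ν : Measure E) [IsFiniteMeasure ν] (t : E) :
    charFun ((ν Set.univ)⁻¹ • ν) t = charFun ν t / charFun ν 0 := by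
  simp [charFun_apply, integral_smul_measure, div_eq_inv_mul, measureReal_def]

lemma exists_isProbabilityMeasure_charFun_mul_eq_dampedAutocorr_div (c : ι → ℂ) (t : ι → ℝ)
    {τ : ℝ} (hτ : τ ≠ 0) (h0 : dampedAutocorr c t τ 0 ≠ 0) :
    ∃ μ : Measure ℝ, IsProbabilityMeasure μ ∧ ∀ lam : ℝ,
      charFun μ lam * cexp (τ ^ 2 * lam ^ 2 / 2) =
        dampedAutocorr c t τ lam / dampedAutocorr c t τ 0 := by
  have := isFiniteMeasure_packetMeasure c t hτ
  have hκ : (√(2 * π * τ ^ 2) : ℂ) ≠ 0 := ofReal_ne_zero.2 (Real.sqrt_ne_zero'.2 (by positivity))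
  have hmass : charFun (packetMeasure c t τ) 0 = √(2 * π * τ ^ 2) * dampedAutocorr c t τ 0 := by
    simpa using charFun_packetMeasure c t 0 hτ
  have : NeZero (packetMeasure c t τ) := ⟨fun h => by simp [h, hκ, h0] at hmass⟩
  refine ⟨(packetMeasure c t τ Set.univ)⁻¹ • packetMeasure c t τ, inferInstance, fun lam => ?_⟩
  have hcancel : (rexp (-(τ ^ 2 * lam ^ 2) / 2) : ℂ) * cexp (τ ^ 2 * lam ^ 2 / 2) = 1 := by
    rw [ofReal_exp, ← Complex.exp_add]
    push_cast
    ring_nf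
    exact Complex.exp_zero
  rw [charFun_inv_univ_smul, charFun_packetMeasure c t lam hτ, hmass, mul_assoc,
    mul_div_mul_left _ _ hκ, div_mul_eq_mul_div, mul_right_comm, hcancel, one_mul]

lemma apply_max_mul_conj_apply_max_neg {φ : ℝ → ℂ} (h0 : φ 0 = 1)
    (hsym : ∀ lam : ℝ, φ (-lam) = conj (φ lam)) (lam : ℝ) :
    φ (max lam 0) * conj (φ (max (-lam) 0)) = φ lam := by
  rcases le_total 0 lam with h | h
  · simp [max_eq_left h, max_eq_right (neg_nonpos.2 h), h0]
  · simp [max_eq_right h, max_eq_left (neg_nonneg.2 h), h0, hsym]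

lemma norm_mul_sub_mul_le_of_norm_sub_le {R : Type*} [NonUnitalSeminormedRing R] {a a' b b' : R}
    {η M : ℝ} (ha : ‖a - a'‖ ≤ η) (hb : ‖b - b'‖ ≤ η) (ha' : ‖a'‖ ≤ M) (hb' : ‖b'‖ ≤ M) :
    ‖a * b - a' * b'‖ ≤ η * (2 * M + η) := by
  have hη : 0 ≤ η := (norm_nonneg _).trans ha
  have hbM : ‖b‖ ≤ M + η := (norm_le_norm_add_norm_sub' b b').trans (add_le_add hb' hb)
  calc ‖a * b - a' * b'‖ = ‖(a - a') * b + a' * (b - b')‖ := by noncomm_ring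
    _ ≤ ‖a - a'‖ * ‖b‖ + ‖a'‖ * ‖b - b'‖ :=
      (norm_add_le _ _).trans (add_le_add (norm_mul_le _ _) (norm_mul_le _ _))
    _ ≤ η * (M + η) + M * η := by gcongr; exact (norm_nonneg _).trans ha'
    _ = η * (2 * M + η) := by ring

lemma norm_div_sub_le_of_norm_sub_le {𝕜 : Type*} [NormedField 𝕜] {a b c : 𝕜} {δ M : ℝ}
    (ha : ‖a - c‖ ≤ δ) (hb : ‖b - 1‖ ≤ δ) (hc : ‖c‖ ≤ M) (hδ : δ ≤ 1 / 2) :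
    ‖a / b - c‖ ≤ 2 * δ * (1 + M) := by
  have hb₀ : 1 / 2 ≤ ‖b‖ := by
    have := norm_sub_norm_le (1 : 𝕜) b
    rw [norm_one, norm_sub_rev] at this
    linarith
  have hb₁ : b ≠ 0 := norm_pos_iff.1 (by linarith)
  have hnum : ‖(a - c) - c * (b - 1)‖ ≤ δ * (1 + M) := by
    have := (norm_sub_le _ _).trans (add_le_add ha ((norm_mul_le _ _).trans
      (mul_le_mul hc hb (norm_nonneg _) ((norm_nonneg _).trans hc))))
    linarith
  calc ‖a / b - c‖ = ‖(a - c) - c * (b - 1)‖ / ‖b‖ := by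
        rw [← norm_div]; congr 1; field_simp; ring
    _ ≤ δ * (1 + M) / (1 / 2) := by
        gcongr
        exact mul_nonneg ((norm_nonneg _).trans ha) (by linarith [(norm_nonneg _).trans hc])
    _ = 2 * δ * (1 + M) := by ring

lemma exists_dampedAutocorr_near {φ : ℝ → ℂ} (hcont : Continuous φ) (h0 : φ 0 = 1)
    (hsym : ∀ lam : ℝ, φ (-lam) = conj (φ lam)) (T : ℝ) {δ : ℝ} (hδ : 0 < δ) :
    ∃ (n : ℕ) (c : Fin n → ℂ) (t : Fin n → ℝ) (τ : ℝ), 0 < τ ∧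
      ∀ lam ∈ Metric.closedBall (0 : ℝ) T, ‖dampedAutocorr c t τ lam - φ lam‖ < δ := by
  set B := Metric.closedBall (0 : ℝ) T
  have hneg : ∀ lam ∈ B, -lam ∈ B := fun lam => by simp [B]
  set G : ℝ → ℂ := fun lam => φ (max lam 0)
  have hG : Continuous G := hcont.comp (continuous_id.max continuous_const)
  obtain ⟨M, hM⟩ := (isCompact_closedBall (0 : ℝ) T).exists_bound_of_continuousOn hG.continuousOn
  replace hM : ∀ lam ∈ B, ‖G lam‖ ≤ |M| := fun lam hlam => (hM lam hlam).trans (le_abs_self M)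
  set η := min 1 (δ / 2 / (2 * |M| + 1))
  have hη : 0 < η := lt_min one_pos (by positivity)
  obtain ⟨n, c, t, hS⟩ := exists_trigPoly_near (isCompact_closedBall 0 T) hG.continuousOn hη
  have hP : ∀ lam ∈ B, ‖trigPoly c t lam * conj (trigPoly c t (-lam)) - φ lam‖ ≤ δ / 2 := by
    intro lam hlam
    rw [← apply_max_mul_conj_apply_max_neg h0 hsym lam]
    calc _ ≤ η * (2 * |M| + η) := norm_mul_sub_mul_le_of_norm_sub_le (hS lam hlam).le
          (by rw [← map_sub, Complex.norm_conj]; exact (hS _ (hneg lam hlam)).le)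
          (hM lam hlam) (by rw [Complex.norm_conj]; exact hM _ (hneg lam hlam))
      _ ≤ η * (2 * |M| + 1) := by gcongr; exact min_le_left _ _
      _ ≤ δ / 2 := (le_div_iff₀ (by positivity)).1 (min_le_right _ _)
  obtain ⟨τ, hτ, hτ₀⟩ := ((Metric.tendstoUniformly_iff.1 (tendstoUniformly_dampedAutocorr c t) _
    (half_pos hδ)).and (eventually_gt_atTop 0)).exists
  refine ⟨n, c, t, τ, hτ₀, fun lam hlam => ?_⟩
  calc ‖dampedAutocorr c t τ lam - φ lam‖
      ≤ ‖dampedAutocorr c t τ lam - trigPoly c t lam * conj (trigPoly c t (-lam))‖ +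
          ‖trigPoly c t lam * conj (trigPoly c t (-lam)) - φ lam‖ :=
        norm_sub_le_norm_sub_add_norm_sub _ _ _
    _ < δ / 2 + δ / 2 := by
      refine add_lt_add_of_lt_of_le ?_ (hP lam hlam)
      rw [norm_sub_rev, ← dist_eq_norm]
      exact hτ lam
    _ = δ := add_halves δ

end

theorem S0_dense_in_S (φ : ℝ → ℂ) (hcont : Continuous φ) (h0 : φ 0 = 1)
    (hsym : ∀ lam : ℝ, φ (-lam) = starRingEnd ℂ (φ lam)) :
    ∀ K : Set ℝ, IsCompact K → ∀ ε > 0,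
      ∃ μ : Measure ℝ, IsProbabilityMeasure μ ∧ ∃ m σ : ℝ, 0 ≤ σ ∧
        ∀ lam ∈ K,
          ‖(∫ x : ℝ, Complex.exp (Complex.I * lam * x) ∂μ) *
              Complex.exp (-Complex.I * m * lam + σ ^ 2 * lam ^ 2 / 2) - φ lam‖ < ε := by
  intro K hK ε hε
  obtain ⟨T, hT, hKT⟩ := hK.isBounded.subset_closedBall_lt 0 0
  obtain ⟨M, hM⟩ := hK.exists_bound_of_continuousOn hcont.continuousOn
  set δ := min (1 / 2) (ε / (4 * (1 + |M|)))
  have hδ : 0 < δ := lt_min one_half_pos (by positivity)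
  obtain ⟨n, c, t, τ, hτ, hN⟩ := exists_dampedAutocorr_near hcont h0 hsym T hδ
  have hN0 : ‖dampedAutocorr c t τ 0 - 1‖ ≤ δ := h0 ▸ (hN 0 (Metric.mem_closedBall_self hT.le)).le
  have hN0' : dampedAutocorr c t τ 0 ≠ 0 := fun h => by
    rw [h, zero_sub, norm_neg, norm_one] at hN0
    linarith [min_le_left (1 / 2 : ℝ) (ε / (4 * (1 + |M|)))]
  obtain ⟨μ, hμ, hμN⟩ :=
    exists_isProbabilityMeasure_charFun_mul_eq_dampedAutocorr_div c t hτ.ne' hN0'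
  refine ⟨μ, hμ, 0, τ, hτ.le, fun lam hlam => ?_⟩
  have hchar : (∫ x : ℝ, cexp (I * lam * x) ∂μ) = charFun μ lam := by
    rw [charFun_apply_real]; congr 1 with x; ring_nf
  rw [hchar, ofReal_zero, mul_zero, zero_mul, zero_add, hμN]
  calc _ ≤ 2 * δ * (1 + |M|) := norm_div_sub_le_of_norm_sub_le (hN lam (hKT hlam)).le hN0
          ((hM lam hlam).trans (le_abs_self M)) (min_le_left _ _)
    _ ≤ 2 * (ε / (4 * (1 + |M|))) * (1 + |M|) := by gcongr; exact min_le_right _ _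
    _ < ε := by field_simp; linarith
end

section
/- Every function of the form λ ↦ P(-iλ), where P is a real polynomial with P(0) = 1, is a limit, uniformly on compact sets, of functions in S₀ (quotients of characteristic functions by Gaussian characteristic functions). -/
open Complex MeasureTheory

noncomputable section ModGaussAux

open Polynomial Real Finset FourierTransform

namespace ModGaussAux

/-- the standard unnormalized gaussian -/
def gr : ℝ → ℝ := fun y => Real.exp (-(y ^ 2 / 2))

def gc : ℝ → ℂ := fun y => (gr y : ℂ)

lemma gr_pos (y : ℝ) : 0 < gr y := Real.exp_pos _

lemma contDiff_gr : ContDiff ℝ (⊤ : ℕ∞) gr :=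
  Real.contDiff_exp.comp (((contDiff_id.pow 2).div_const 2).neg)

lemma contDiff_gc : ContDiff ℝ (⊤ : ℕ∞) gc :=
  Complex.ofRealCLM.contDiff.comp contDiff_gr

lemma iteratedDeriv_ofReal (f : ℝ → ℝ) (hf : ContDiff ℝ (⊤ : ℕ∞) f) (k : ℕ) :
    iteratedDeriv k (fun x => (f x : ℂ)) = fun x => ((iteratedDeriv k f x : ℝ) : ℂ) := by
  induction k with
  | zero => simp
  | succ k ih =>
    have hd : Differentiable ℝ (iteratedDeriv k f) :=
      hf.differentiable_iteratedDeriv k (by exact_mod_cast lt_top_iff_ne_top.mpr (by simp))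
    funext x
    rw [iteratedDeriv_succ, ih, iteratedDeriv_succ]
    exact ((hd x).hasDerivAt.ofReal_comp).deriv

lemma iteratedDeriv_gc (k : ℕ) :
    iteratedDeriv k gc = fun y => (((-1 : ℝ) ^ k * aeval y (hermite k) * gr y : ℝ) : ℂ) := by
  rw [show gc = fun x => ((gr x : ℝ) : ℂ) from rfl, iteratedDeriv_ofReal gr contDiff_gr]
  funext y
  exact congrArg Complex.ofReal
    (by rw [iteratedDeriv_eq_iterate]
        exact Polynomial.deriv_gaussian_eq_hermite_mul_gaussian k y)

/-- real-coefficient version of the Hermite polynomial -/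
def Hk (k : ℕ) : Polynomial ℝ := (hermite k).map (algebraMap ℤ ℝ)

lemma eval_Hk (k : ℕ) (y : ℝ) : eval y (Hk k) = aeval y (hermite k) := by
  rw [Hk, eval_map, aeval_def]

lemma iteratedDeriv_gc_scaled (s : ℝ) (k : ℕ) :
    iteratedDeriv k (fun x => gc (s⁻¹ * x)) =
      fun x => ((s⁻¹ ^ k * ((-1 : ℝ) ^ k * eval (s⁻¹ * x) (Hk k) * gr (s⁻¹ * x)) : ℝ) : ℂ) := by
  have h := iteratedDeriv_comp_const_smul (contDiff_gc.of_le (mod_cast le_top)) s⁻¹ (n := k)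
  funext x
  rw [h, iteratedDeriv_gc]
  rw [eval_Hk]
  push_cast
  rw [Complex.real_smul]
  push_cast
  ring


lemma integrable_poly_mul_gauss (q : Polynomial ℝ) {b : ℝ} (hb : 0 < b) :
    Integrable (fun x : ℝ => eval x q * Real.exp (-b * x ^ 2)) := by
  induction q using Polynomial.induction_on' with
  | add p r hp hr => simp only [eval_add, add_mul]; exact hp.add hr
  | monomial j a =>
    simp only [eval_monomial]
    have h2 : Integrable (fun x : ℝ => x ^ j * Real.exp (-b * x ^ 2)) := by
      simpa [Real.rpow_natCast] using integrable_rpow_mul_exp_neg_mul_sq hb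
        (lt_of_lt_of_le neg_one_lt_zero (Nat.cast_nonneg j))
    simpa [mul_assoc] using h2.const_mul a

lemma continuous_eval_gauss (q : Polynomial ℝ) (c : ℝ) :
    Continuous (fun x : ℝ => eval (c * x) q * gr (c * x)) := by
  have h1 : Continuous fun x : ℝ => eval (c * x) q :=
    (Polynomial.continuous q).comp (continuous_const.mul continuous_id)
  have h2 : Continuous gr := Real.continuous_exp.comp (by fun_prop)
  exact h1.mul (h2.comp (continuous_const.mul continuous_id))

lemma integrable_eval_gauss (q : Polynomial ℝ) {c : ℝ} (hc : 0 < c) :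
    Integrable (fun x : ℝ => eval (c * x) q * gr (c * x)) := by
  have h := integrable_poly_mul_gauss (q.comp (Polynomial.C c * Polynomial.X))
    (b := c ^ 2 / 2) (by positivity)
  refine h.congr (Filter.Eventually.of_forall fun x => ?_)
  simp only [eval_comp, eval_mul, eval_C, eval_X, gr]
  congr 1
  ring_nf

lemma integrable_cexp_mul {F : ℝ → ℂ} (h : Integrable F) (lam : ℝ) :
    Integrable fun x : ℝ => Complex.exp (Complex.I * lam * x) * F x := by
  refine h.bdd_mul (c := 1) ?_ (Filter.Eventually.of_forall fun x => ?_)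
  · exact (Complex.continuous_exp.comp (by fun_prop)).aestronglyMeasurable
  · rw [Complex.norm_exp]
    simp

lemma integral_exp_mul_eq_fourier (f : ℝ → ℂ) (lam : ℝ) :
    (∫ x : ℝ, Complex.exp (Complex.I * lam * x) * f x) = 𝓕 f (-(lam / (2 * Real.pi))) := by
  rw [Real.fourier_real_eq_integral_exp_smul]
  congr 1
  funext v
  rw [smul_eq_mul]
  congr 2
  have h : (-2 * Real.pi * v * (-(lam / (2 * Real.pi)))) = lam * v := by
    field_simp
  rw [h]
  push_cast
  ring

lemma ft_gauss {c : ℝ} (hc : 0 < c) (lam : ℝ) :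
    (∫ x : ℝ, Complex.exp (Complex.I * lam * x) * gc (c⁻¹ * x)) =
      ((Real.sqrt (2 * Real.pi) * c : ℝ) : ℂ) *
        Complex.exp (-(c ^ 2 * lam ^ 2 / 2 : ℝ)) := by
  have hb : (0:ℝ) < (2 * c ^ 2)⁻¹ := by positivity
  have hgc : ∀ x : ℝ, gc (c⁻¹ * x) =
      Complex.exp (-((((2 * c ^ 2)⁻¹ : ℝ)) : ℂ) * (x:ℂ) ^ 2) := by
    intro x
    rw [gc, gr, Complex.ofReal_exp]
    congr 1
    push_cast
    field_simp
  have key := fourierIntegral_gaussian (b := (((2 * c ^ 2)⁻¹ : ℝ) : ℂ))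
    (by rwa [Complex.ofReal_re]) (lam : ℂ)
  simp only [hgc]
  rw [key]
  congr 1
  · have h1 : ((Real.pi : ℂ)) / (((2 * c ^ 2)⁻¹ : ℝ) : ℂ) = ((2 * Real.pi * c ^ 2 : ℝ) : ℂ) := by
      push_cast
      field_simp
    rw [h1, show ((1:ℂ)/2) = (((1:ℝ)/2 : ℝ) : ℂ) by norm_num,
      ← Complex.ofReal_cpow (by positivity)]
    congr 1
    rw [show (1:ℝ)/2 = ((1:ℝ)/2) from rfl, ← Real.sqrt_eq_rpow,
      show 2 * Real.pi * c ^ 2 = (2 * Real.pi) * c ^ 2 by ring,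
      Real.sqrt_mul (by positivity), Real.sqrt_sq hc.le]
  · congr 1
    push_cast
    field_simp
    ring


lemma integrable_scaled_deriv {s : ℝ} (hs : 0 < s) (k : ℕ) :
    Integrable (iteratedDeriv k (fun x : ℝ => gc (s⁻¹ * x))) := by
  rw [iteratedDeriv_gc_scaled]
  have base : Integrable (fun x : ℝ =>
      s⁻¹ ^ k * ((-1 : ℝ) ^ k * eval (s⁻¹ * x) (Hk k) * gr (s⁻¹ * x))) := by
    have h := (integrable_eval_gauss (Hk k) (inv_pos.mpr hs)).const_mul
      (s⁻¹ ^ k * (-1 : ℝ) ^ k)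
    exact h.congr (Filter.Eventually.of_forall fun x => by ring)
  exact base.ofReal

lemma contDiff_gc_scaled (s : ℝ) : ContDiff ℝ (⊤ : ℕ∞) (fun x : ℝ => gc (s⁻¹ * x)) :=
  contDiff_gc.comp (contDiff_const.mul contDiff_id)

lemma ft_iteratedDeriv {s : ℝ} (hs : 0 < s) (k : ℕ) (lam : ℝ) :
    (∫ x : ℝ, Complex.exp (Complex.I * lam * x) *
        iteratedDeriv k (fun x : ℝ => gc (s⁻¹ * x)) x) =
      (-(Complex.I * lam)) ^ k * (((Real.sqrt (2 * Real.pi) * s : ℝ) : ℂ) *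
        Complex.exp (-(s ^ 2 * lam ^ 2 / 2 : ℝ))) := by
  have h := Real.fourier_iteratedDeriv (N := (⊤ : ℕ∞)) (n := k)
    ((contDiff_gc_scaled s).of_le (mod_cast le_top)) (fun n _ => integrable_scaled_deriv hs n) (mod_cast le_top)
  rw [integral_exp_mul_eq_fourier, h]
  have h2 : (2 * (Real.pi : ℂ) * Complex.I * ((-(lam / (2 * Real.pi)) : ℝ) : ℂ)) =
      -(Complex.I * lam) := by
    have : (Real.pi : ℂ) ≠ 0 := by
      exact_mod_cast Complex.ofReal_ne_zero.mpr Real.pi_ne_zero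
    push_cast
    field_simp
  simp only [smul_eq_mul]
  rw [h2, ← integral_exp_mul_eq_fourier, ft_gauss hs lam]

/-- the (unnormalized) candidate density -/
def dens (P : Polynomial ℝ) (s : ℝ) : ℝ → ℝ := fun x =>
  (∑ k ∈ Finset.range (P.natDegree + 1),
      P.coeff k * (s⁻¹ ^ k * ((-1 : ℝ) ^ k * eval (s⁻¹ * x) (Hk k) * gr (s⁻¹ * x)))) +
    (2 * s)⁻¹ * gr ((2 * s)⁻¹ * x)

lemma continuous_dens (P : Polynomial ℝ) (s : ℝ) : Continuous (dens P s) := by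
  refine Continuous.add (continuous_finset_sum _ fun k _ => ?_) ?_
  · have h : Continuous (fun x : ℝ =>
        (P.coeff k * (s⁻¹ ^ k * (-1:ℝ) ^ k)) * (eval (s⁻¹ * x) (Hk k) * gr (s⁻¹ * x))) :=
      continuous_const.mul (continuous_eval_gauss (Hk k) s⁻¹)
    exact h.congr (fun x => by ring)
  · exact continuous_const.mul (((continuous_eval_gauss 1 (2*s)⁻¹)).congr
      (fun x => by simp [gr]))

lemma integrable_dens (P : Polynomial ℝ) {s : ℝ} (hs : 0 < s) :
    Integrable (dens P s) := by
  refine Integrable.add (integrable_finset_sum _ fun k _ => ?_) ?_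
  · have h := (integrable_eval_gauss (Hk k) (inv_pos.mpr hs)).const_mul
      (P.coeff k * (s⁻¹ ^ k * (-1:ℝ) ^ k))
    refine h.congr (Filter.Eventually.of_forall fun x => ?_)
    show _ = P.coeff k * (s⁻¹ ^ k * ((-1:ℝ) ^ k * eval (s⁻¹ * x) (Hk k) * gr (s⁻¹ * x)))
    ring
  · have h := (integrable_eval_gauss 1 (inv_pos.mpr (by positivity : (0:ℝ) < 2 * s))).const_mul
      (2 * s)⁻¹
    refine h.congr (Filter.Eventually.of_forall fun x => ?_)
    show _ = (2 * s)⁻¹ * gr ((2 * s)⁻¹ * x)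
    simp

lemma dens_complex (P : Polynomial ℝ) (s : ℝ) (x : ℝ) :
    ((dens P s x : ℝ) : ℂ) =
      (∑ k ∈ Finset.range (P.natDegree + 1),
        (P.coeff k : ℂ) * iteratedDeriv k (fun x : ℝ => gc (s⁻¹ * x)) x) +
      (((2 * s)⁻¹ : ℝ) : ℂ) * gc ((2 * s)⁻¹ * x) := by
  simp only [iteratedDeriv_gc_scaled]
  simp only [dens, gc]
  push_cast
  ring

lemma ft_dens (P : Polynomial ℝ) {s : ℝ} (hs : 0 < s) (lam : ℝ) :
    (∫ x : ℝ, Complex.exp (Complex.I * lam * x) * ((dens P s x : ℝ) : ℂ)) =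
      ((Real.sqrt (2 * Real.pi) * s : ℝ) : ℂ) *
        ((P.map (algebraMap ℝ ℂ)).eval (-(Complex.I * lam)) *
            Complex.exp (-(s ^ 2 * lam ^ 2 / 2 : ℝ)) +
          (s⁻¹ : ℂ) * Complex.exp (-(2 * s ^ 2 * lam ^ 2 : ℝ))) := by
  have h2s : (0:ℝ) < 2 * s := by positivity
  have hre : (fun x : ℝ => Complex.exp (Complex.I * lam * x) * ((dens P s x : ℝ) : ℂ)) =
      fun x : ℝ => (∑ k ∈ Finset.range (P.natDegree + 1),
          Complex.exp (Complex.I * lam * x) *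
            ((P.coeff k : ℂ) * iteratedDeriv k (fun x : ℝ => gc (s⁻¹ * x)) x)) +
        Complex.exp (Complex.I * lam * x) * ((((2 * s)⁻¹ : ℝ) : ℂ) * gc ((2 * s)⁻¹ * x)) := by
    funext x
    rw [dens_complex P s, mul_add, Finset.mul_sum]
  have hint_k : ∀ k, Integrable (fun x : ℝ => Complex.exp (Complex.I * lam * x) *
      ((P.coeff k : ℂ) * iteratedDeriv k (fun x : ℝ => gc (s⁻¹ * x)) x)) :=
    fun k => integrable_cexp_mul ((integrable_scaled_deriv hs k).const_mul _) lam
  have hint_h : Integrable (fun x : ℝ => Complex.exp (Complex.I * lam * x) *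
      ((((2 * s)⁻¹ : ℝ) : ℂ) * gc ((2 * s)⁻¹ * x))) := by
    refine integrable_cexp_mul (Integrable.const_mul ?_ _) lam
    exact ((integrable_eval_gauss 1 (inv_pos.mpr h2s)).ofReal).congr
      (Filter.Eventually.of_forall fun x => by simp [gc])
  rw [hre, integral_add (integrable_finset_sum _ fun k _ => hint_k k) hint_h,
    integral_finset_sum _ fun k _ => hint_k k]
  have hterm : ∀ k ∈ Finset.range (P.natDegree + 1),
      (∫ x : ℝ, Complex.exp (Complex.I * lam * x) *
        ((P.coeff k : ℂ) * iteratedDeriv k (fun x : ℝ => gc (s⁻¹ * x)) x)) =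
      (P.coeff k : ℂ) * ((-(Complex.I * lam)) ^ k *
        (((Real.sqrt (2 * Real.pi) * s : ℝ) : ℂ) *
          Complex.exp (-(s ^ 2 * lam ^ 2 / 2 : ℝ)))) := by
    intro k _
    rw [← ft_iteratedDeriv hs k lam, ← integral_const_mul]
    congr 1
    funext x
    ring
  rw [Finset.sum_congr rfl hterm]
  have hg2 : (∫ x : ℝ, Complex.exp (Complex.I * lam * x) *
      ((((2 * s)⁻¹ : ℝ) : ℂ) * gc ((2 * s)⁻¹ * x))) =
      (((2 * s)⁻¹ : ℝ) : ℂ) * (((Real.sqrt (2 * Real.pi) * (2 * s) : ℝ) : ℂ) *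
        Complex.exp (-((2 * s) ^ 2 * lam ^ 2 / 2 : ℝ))) := by
    rw [← ft_gauss h2s lam, ← integral_const_mul]
    congr 1
    funext x
    ring
  rw [hg2]
  rw [Polynomial.eval_map, Polynomial.eval₂_eq_sum_range]
  have harg : ((2 * s) ^ 2 * lam ^ 2 / 2 : ℝ) = 2 * s ^ 2 * lam ^ 2 := by ring
  rw [harg]
  have hsne : (s : ℂ) ≠ 0 := by exact_mod_cast hs.ne'
  rw [Finset.sum_mul, mul_add, Finset.mul_sum]
  congr 1
  · refine Finset.sum_congr rfl fun k _ => ?_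
    simp only [Complex.coe_algebraMap]
    ring
  · push_cast
    field_simp


lemma integral_dens (P : Polynomial ℝ) (hP : P.eval 0 = 1) {s : ℝ} (hs : 0 < s) :
    (∫ x : ℝ, dens P s x) = Real.sqrt (2 * Real.pi) * s * (1 + s⁻¹) := by
  have h0 := ft_dens P hs 0
  have hL : (∫ x : ℝ, Complex.exp (Complex.I * ((0:ℝ) : ℂ) * x) * ((dens P s x : ℝ) : ℂ))
      = (((∫ x : ℝ, dens P s x) : ℝ) : ℂ) := by
    simp only [Complex.ofReal_zero, mul_zero, zero_mul, Complex.exp_zero, one_mul]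
    exact integral_ofReal
  have hev : (P.map (algebraMap ℝ ℂ)).eval (-(Complex.I * ((0:ℝ) : ℂ))) = 1 := by
    simp only [Complex.ofReal_zero, mul_zero, neg_zero]
    rw [Polynomial.eval_map, Polynomial.eval₂_at_zero, Polynomial.coeff_zero_eq_eval_zero, hP]
    simp
  have h2 : (((∫ x : ℝ, dens P s x) : ℝ) : ℂ)
      = (((Real.sqrt (2 * Real.pi) * s * (1 + s⁻¹)) : ℝ) : ℂ) := by
    rw [← hL, h0, hev]
    push_cast
    norm_num [Complex.exp_zero]
  exact Complex.ofReal_injective h2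

lemma pow_abs_le_exp (j : ℕ) : ∃ C : ℝ, 0 ≤ C ∧ ∀ u : ℝ,
    |u| ^ j ≤ C * Real.exp (3 * u ^ 2 / 16) := by
  set a : ℝ := 3 / (16 * ((j:ℝ) + 1)) with ha
  have hap : 0 < a := by positivity
  have h1a : (0:ℝ) < 1 + 1/a := by
    have := one_div_pos.mpr hap
    linarith
  refine ⟨(1 + 1/a) ^ j, le_of_lt (pow_pos h1a j), fun u => ?_⟩
  have h1 : |u| ≤ 1 + u ^ 2 := by nlinarith [sq_nonneg (|u| - 1), _root_.sq_abs u, abs_nonneg u]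
  have hE1 : 1 ≤ Real.exp (a * u ^ 2) := Real.one_le_exp (by positivity)
  have h3 : u ^ 2 ≤ Real.exp (a * u ^ 2) / a := by
    rw [le_div_iff₀ hap]
    nlinarith [Real.add_one_le_exp (a * u ^ 2)]
  have h2 : 1 + u ^ 2 ≤ (1 + 1/a) * Real.exp (a * u ^ 2) := by
    have hexp : (1 + 1/a) * Real.exp (a * u ^ 2)
        = Real.exp (a * u ^ 2) + Real.exp (a * u ^ 2) / a := by
      field_simp
    rw [hexp]
    linarith
  have hstep : (j : ℝ) * (a * u ^ 2) ≤ 3 * u ^ 2 / 16 := by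
    have hj : (0:ℝ) < 16 * ((j:ℝ) + 1) := by positivity
    have hfrac : (j:ℝ) / (16 * ((j:ℝ)+1)) ≤ 1 / 16 := by
      rw [div_le_div_iff₀ hj (by norm_num : (0:ℝ) < 16)]
      nlinarith [Nat.cast_nonneg (α := ℝ) j]
    have heq : (j : ℝ) * (a * u ^ 2) = (3 * u ^ 2) * ((j:ℝ) / (16 * ((j:ℝ)+1))) := by
      rw [ha]
      field_simp
    have heq2 : 3 * u ^ 2 / 16 = (3 * u ^ 2) * (1 / 16) := by ring
    rw [heq, heq2]
    exact mul_le_mul_of_nonneg_left hfrac (by positivity)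
  calc |u| ^ j ≤ (1 + u ^ 2) ^ j := pow_le_pow_left₀ (abs_nonneg u) h1 j
    _ ≤ ((1 + 1/a) * Real.exp (a * u ^ 2)) ^ j := pow_le_pow_left₀ (by positivity) h2 j
    _ = (1 + 1/a) ^ j * Real.exp (a * u ^ 2) ^ j := mul_pow _ _ j
    _ = (1 + 1/a) ^ j * Real.exp ((j:ℝ) * (a * u ^ 2)) := by rw [← Real.exp_nat_mul]
    _ ≤ (1 + 1/a) ^ j * Real.exp (3 * u ^ 2 / 16) := by
        exact mul_le_mul_of_nonneg_left (Real.exp_le_exp.mpr hstep)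
          (le_of_lt (pow_pos h1a j))

lemma eval_abs_le_exp (q : Polynomial ℝ) : ∃ C : ℝ, 0 ≤ C ∧ ∀ u : ℝ,
    |eval u q| ≤ C * Real.exp (3 * u ^ 2 / 16) := by
  choose C hC0 hC using pow_abs_le_exp
  refine ⟨∑ j ∈ Finset.range (q.natDegree + 1), |q.coeff j| * C j,
    Finset.sum_nonneg fun j _ => mul_nonneg (abs_nonneg _) (hC0 j), fun u => ?_⟩
  rw [Polynomial.eval_eq_sum_range, Finset.sum_mul]
  calc |∑ j ∈ Finset.range (q.natDegree + 1), q.coeff j * u ^ j|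
      ≤ ∑ j ∈ Finset.range (q.natDegree + 1), |q.coeff j * u ^ j| :=
        Finset.abs_sum_le_sum_abs _ _
    _ ≤ ∑ j ∈ Finset.range (q.natDegree + 1), |q.coeff j| * C j * Real.exp (3 * u ^ 2 / 16) := by
        refine Finset.sum_le_sum fun j _ => ?_
        rw [abs_mul, _root_.abs_pow, mul_assoc]
        exact mul_le_mul_of_nonneg_left (hC j u) (abs_nonneg _)

lemma hermite_sum_bound (P : Polynomial ℝ) : ∃ D : ℝ, 0 ≤ D ∧ ∀ u : ℝ,
    (∑ i ∈ Finset.range P.natDegree, |P.coeff (i+1)| * |eval u (Hk (i+1))|)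
      ≤ D * Real.exp (3 * u ^ 2 / 16) := by
  choose C hC0 hC using fun i : ℕ => eval_abs_le_exp (Hk (i+1))
  refine ⟨∑ i ∈ Finset.range P.natDegree, |P.coeff (i+1)| * C i,
    Finset.sum_nonneg fun i _ => mul_nonneg (abs_nonneg _) (hC0 i), fun u => ?_⟩
  rw [Finset.sum_mul]
  refine Finset.sum_le_sum fun i _ => ?_
  rw [mul_assoc]
  exact mul_le_mul_of_nonneg_left (hC i u) (abs_nonneg _)

lemma dens_nonneg (P : Polynomial ℝ) (hP : P.eval 0 = 1) :
    ∃ s₀ : ℝ, 1 ≤ s₀ ∧ ∀ s : ℝ, s₀ ≤ s → ∀ x : ℝ, 0 ≤ dens P s x := by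
  obtain ⟨D, hD0, hD⟩ := hermite_sum_bound P
  refine ⟨max 1 (2 * D ^ 2), le_max_left _ _, fun s hss x => ?_⟩
  have hs1 : (1:ℝ) ≤ s := le_trans (le_max_left _ _) hss
  have hs : (0:ℝ) < s := lt_of_lt_of_le one_pos hs1
  have hsD : 2 * D ^ 2 ≤ s := le_trans (le_max_right _ _) hss
  set u := s⁻¹ * x with hu
  set v := Real.exp (3 * u ^ 2 / 16) with hv
  have hv1 : 1 ≤ v := Real.one_le_exp (by positivity)
  have hgr : 0 < gr u := gr_pos u
  have hsplit : dens P s x = gr u +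
      (∑ i ∈ Finset.range P.natDegree,
        P.coeff (i+1) * (s⁻¹ ^ (i+1) * ((-1:ℝ) ^ (i+1) * eval u (Hk (i+1)) * gr u))) +
      (2*s)⁻¹ * gr ((2*s)⁻¹ * x) := by
    rw [dens, Finset.sum_range_succ']
    have h0 : P.coeff 0 = 1 := by rw [Polynomial.coeff_zero_eq_eval_zero, hP]
    have hHk0 : Hk 0 = 1 := by rw [Hk, Polynomial.hermite_zero]; simp
    rw [h0, hHk0]
    simp only [pow_zero, Polynomial.eval_one, one_mul, mul_one]
    ring
  have hRb : |∑ i ∈ Finset.range P.natDegree,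
      P.coeff (i+1) * (s⁻¹ ^ (i+1) * ((-1:ℝ) ^ (i+1) * eval u (Hk (i+1)) * gr u))|
      ≤ s⁻¹ * (D * v) * gr u := by
    have hsinv : (0:ℝ) ≤ s⁻¹ := le_of_lt (inv_pos.mpr hs)
    calc |∑ i ∈ Finset.range P.natDegree,
        P.coeff (i+1) * (s⁻¹ ^ (i+1) * ((-1:ℝ) ^ (i+1) * eval u (Hk (i+1)) * gr u))|
        ≤ ∑ i ∈ Finset.range P.natDegree,
          |P.coeff (i+1) * (s⁻¹ ^ (i+1) * ((-1:ℝ) ^ (i+1) * eval u (Hk (i+1)) * gr u))| :=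
          Finset.abs_sum_le_sum_abs _ _
      _ ≤ ∑ i ∈ Finset.range P.natDegree,
          (|P.coeff (i+1)| * |eval u (Hk (i+1))|) * (s⁻¹ * gr u) := by
          refine Finset.sum_le_sum fun i _ => ?_
          have h1 : |P.coeff (i+1) * (s⁻¹ ^ (i+1) * ((-1:ℝ) ^ (i+1) * eval u (Hk (i+1)) * gr u))|
              = |P.coeff (i+1)| * (s⁻¹ ^ (i+1) * (|eval u (Hk (i+1))| * gr u)) := by
            rw [abs_mul, abs_mul, abs_mul, abs_mul, _root_.abs_pow, _root_.abs_pow, abs_neg, abs_one, one_pow,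
              one_mul, abs_of_pos hgr, _root_.abs_of_nonneg hsinv]
          have h2 : s⁻¹ ^ (i+1) ≤ s⁻¹ := by
            have hle1 : s⁻¹ ≤ 1 := inv_le_one_of_one_le₀ hs1
            calc s⁻¹ ^ (i+1) ≤ s⁻¹ ^ 1 :=
                  pow_le_pow_of_le_one hsinv hle1 (by omega)
              _ = s⁻¹ := pow_one _
          rw [h1]
          calc |P.coeff (i+1)| * (s⁻¹ ^ (i+1) * (|eval u (Hk (i+1))| * gr u))
              ≤ |P.coeff (i+1)| * (s⁻¹ * (|eval u (Hk (i+1))| * gr u)) := by gcongr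
            _ = (|P.coeff (i+1)| * |eval u (Hk (i+1))|) * (s⁻¹ * gr u) := by ring
      _ = (∑ i ∈ Finset.range P.natDegree,
            |P.coeff (i+1)| * |eval u (Hk (i+1))|) * (s⁻¹ * gr u) :=
          (Finset.sum_mul _ _ _).symm
      _ ≤ (D * v) * (s⁻¹ * gr u) := by
          refine mul_le_mul_of_nonneg_right ?_ (by positivity)
          exact hD u
      _ = s⁻¹ * (D * v) * gr u := by ring
  have hgrh : gr ((2*s)⁻¹ * x) = gr u * (v * v) := by
    have hx2 : (2*s)⁻¹ * x = u / 2 := by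
      rw [hu, mul_inv]
      ring
    rw [hx2, hv, gr, gr, ← Real.exp_add, ← Real.exp_add]
    congr 1
    ring
  have key : D * v ≤ s + v ^ 2 / 2 := by
    nlinarith [sq_nonneg (v - 2*D), hv1, hD0, hsD]
  have hfac : 0 ≤ 1 - s⁻¹ * (D * v) + (2*s)⁻¹ * (v * v) := by
    have h' : 0 ≤ s - D * v + v ^ 2 / 2 := by linarith
    have heq : 1 - s⁻¹ * (D * v) + (2*s)⁻¹ * (v * v) = s⁻¹ * (s - D * v + v ^ 2 / 2) := by
      field_simp
    rw [heq]
    exact mul_nonneg (le_of_lt (inv_pos.mpr hs)) h'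
  have hR2 : -(s⁻¹ * (D * v) * gr u) ≤ ∑ i ∈ Finset.range P.natDegree,
      P.coeff (i+1) * (s⁻¹ ^ (i+1) * ((-1:ℝ) ^ (i+1) * eval u (Hk (i+1)) * gr u)) := by
    have := neg_abs_le (∑ i ∈ Finset.range P.natDegree,
      P.coeff (i+1) * (s⁻¹ ^ (i+1) * ((-1:ℝ) ^ (i+1) * eval u (Hk (i+1)) * gr u)))
    linarith
  have hchain : (0:ℝ) ≤ gr u * (1 - s⁻¹ * (D * v) + (2*s)⁻¹ * (v * v)) :=
    mul_nonneg hgr.le hfac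
  have hexpand : gr u * (1 - s⁻¹ * (D * v) + (2*s)⁻¹ * (v * v))
      = gr u - s⁻¹ * (D * v) * gr u + (2*s)⁻¹ * (gr u * (v * v)) := by ring
  rw [hsplit, hgrh]
  rw [hexpand] at hchain
  linarith

end ModGaussAux

end ModGaussAux

open ModGaussAux in
theorem poly_is_mod_gaussian_limit (P : Polynomial ℝ) (hP : P.eval 0 = 1) :
    ∀ K : Set ℝ, IsCompact K → ∀ ε > 0,
      ∃ μ : Measure ℝ, IsProbabilityMeasure μ ∧ ∃ σ : ℝ, 0 < σ ∧
        ∀ lam ∈ K,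
          ‖(∫ x : ℝ, Complex.exp (Complex.I * lam * x) ∂μ) *
              Complex.exp ((σ ^ 2 * lam ^ 2 / 2 : ℝ)) -
            (P.map (algebraMap ℝ ℂ)).eval (-Complex.I * lam)‖ < ε := by
  intro K hK ε hε
  have hcont : ContinuousOn
      (fun lam : ℝ => (P.map (algebraMap ℝ ℂ)).eval (-(Complex.I * (lam : ℂ)))) K :=
    ((P.map (algebraMap ℝ ℂ)).continuous_aeval.comp
      ((continuous_const.mul Complex.continuous_ofReal).neg)).continuousOn
  obtain ⟨M0, hM0⟩ := hK.exists_bound_of_continuousOn hcont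
  set M := max M0 0 with hMdef
  have hM0' : (0:ℝ) ≤ M := le_max_right _ _
  have hMb : ∀ lam ∈ K, ‖(P.map (algebraMap ℝ ℂ)).eval (-(Complex.I * (lam : ℂ)))‖ ≤ M :=
    fun lam hlam => le_trans (hM0 lam hlam) (le_max_left _ _)
  obtain ⟨s₀, hs₀1, hnn⟩ := dens_nonneg P hP
  set s : ℝ := max s₀ ((M + 1) / ε) with hsdef
  have hs1 : (1:ℝ) ≤ s := le_trans hs₀1 (le_max_left _ _)
  have hs : (0:ℝ) < s := lt_of_lt_of_le one_pos hs1
  have hsM : (M + 1) / ε ≤ s := le_max_right _ _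
  have hnneg : ∀ x : ℝ, 0 ≤ dens P s x := hnn s (le_max_left _ _)
  set T : ℝ := ∫ x : ℝ, dens P s x with hTdef
  have hTval : T = Real.sqrt (2 * Real.pi) * s * (1 + s⁻¹) := integral_dens P hP hs
  have hsqrt : (0:ℝ) < Real.sqrt (2 * Real.pi) := Real.sqrt_pos.mpr (by positivity)
  have hsinv : (0:ℝ) < 1 + s⁻¹ := by positivity
  have hTpos : 0 < T := by
    rw [hTval]
    positivity
  have hmeas : Measurable fun x : ℝ => Real.toNNReal (T⁻¹ * dens P s x) :=
    (continuous_const.mul (continuous_dens P s)).measurable.real_toNNReal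
  refine ⟨volume.withDensity (fun x => ENNReal.ofReal (T⁻¹ * dens P s x)), ?_, s, hs, ?_⟩
  · constructor
    rw [withDensity_apply _ MeasurableSet.univ, Measure.restrict_univ,
      ← ofReal_integral_eq_lintegral_ofReal ((integrable_dens P hs).const_mul T⁻¹)
        (Filter.Eventually.of_forall fun x =>
          mul_nonneg (inv_nonneg.mpr hTpos.le) (hnneg x))]
    rw [integral_const_mul, ← hTdef, inv_mul_cancel₀ hTpos.ne', ENNReal.ofReal_one]
  · intro lam hlam
    have hchar : (∫ x : ℝ, Complex.exp (Complex.I * lam * x)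
        ∂(volume.withDensity fun x => ENNReal.ofReal (T⁻¹ * dens P s x)))
        = ((T⁻¹ : ℝ) : ℂ) *
          (∫ x : ℝ, Complex.exp (Complex.I * lam * x) * ((dens P s x : ℝ) : ℂ)) := by
      rw [show (fun x : ℝ => ENNReal.ofReal (T⁻¹ * dens P s x))
          = (fun x : ℝ => ((Real.toNNReal (T⁻¹ * dens P s x) : NNReal) : ENNReal)) from rfl,
        integral_withDensity_eq_integral_smul hmeas, ← integral_const_mul]
      congr 1
      funext x
      rw [NNReal.smul_def, Real.coe_toNNReal _
        (mul_nonneg (inv_nonneg.mpr hTpos.le) (hnneg x)), Complex.real_smul]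
      push_cast
      ring
    rw [show (-Complex.I * (lam:ℂ)) = -(Complex.I * (lam:ℂ)) by ring]
    rw [hchar, ft_dens P hs lam]
    set Pe := (P.map (algebraMap ℝ ℂ)).eval (-(Complex.I * (lam:ℂ))) with hPe
    have hTc : ((T⁻¹ : ℝ) : ℂ) * ((Real.sqrt (2 * Real.pi) * s : ℝ) : ℂ)
        = (((1 + s⁻¹)⁻¹ : ℝ) : ℂ) := by
      rw [← Complex.ofReal_mul]
      congr 1
      rw [hTval]
      field_simp
    have hexp1 : Complex.exp (-((s^2*lam^2/2 : ℝ) : ℂ)) *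
        Complex.exp (((s^2*lam^2/2 : ℝ) : ℂ)) = 1 := by
      rw [← Complex.exp_add]
      simp
    have hexp2 : Complex.exp (-((2*s^2*lam^2 : ℝ) : ℂ)) *
        Complex.exp (((s^2*lam^2/2 : ℝ) : ℂ))
        = Complex.exp (-((3/2*s^2*lam^2 : ℝ) : ℂ)) := by
      rw [← Complex.exp_add]
      congr 1
      push_cast
      ring
    have hre : ((T⁻¹ : ℝ) : ℂ) * (((Real.sqrt (2 * Real.pi) * s : ℝ) : ℂ) *
          (Pe * Complex.exp (-((s ^ 2 * lam ^ 2 / 2 : ℝ) : ℂ)) +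
            ((s:ℂ))⁻¹ * Complex.exp (-((2 * s ^ 2 * lam ^ 2 : ℝ) : ℂ)))) *
          Complex.exp (((s ^ 2 * lam ^ 2 / 2 : ℝ) : ℂ)) - Pe
        = ((((1 + s⁻¹)⁻¹ : ℝ) : ℂ) - 1) * Pe +
          (((1 + s⁻¹)⁻¹ : ℝ) : ℂ) * ((s:ℂ))⁻¹ *
            Complex.exp (-((3/2*s^2*lam^2 : ℝ) : ℂ)) := by
      calc ((T⁻¹ : ℝ) : ℂ) * (((Real.sqrt (2 * Real.pi) * s : ℝ) : ℂ) *
          (Pe * Complex.exp (-((s ^ 2 * lam ^ 2 / 2 : ℝ) : ℂ)) +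
            ((s:ℂ))⁻¹ * Complex.exp (-((2 * s ^ 2 * lam ^ 2 : ℝ) : ℂ)))) *
          Complex.exp (((s ^ 2 * lam ^ 2 / 2 : ℝ) : ℂ)) - Pe
          = (((T⁻¹ : ℝ) : ℂ) * ((Real.sqrt (2 * Real.pi) * s : ℝ) : ℂ)) *
            (Pe * (Complex.exp (-((s ^ 2 * lam ^ 2 / 2 : ℝ) : ℂ)) *
                Complex.exp (((s ^ 2 * lam ^ 2 / 2 : ℝ) : ℂ))) +
              ((s:ℂ))⁻¹ * (Complex.exp (-((2 * s ^ 2 * lam ^ 2 : ℝ) : ℂ)) *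
                Complex.exp (((s ^ 2 * lam ^ 2 / 2 : ℝ) : ℂ)))) - Pe := by ring
        _ = ((((1 + s⁻¹)⁻¹ : ℝ) : ℂ) - 1) * Pe +
            (((1 + s⁻¹)⁻¹ : ℝ) : ℂ) * ((s:ℂ))⁻¹ *
              Complex.exp (-((3/2*s^2*lam^2 : ℝ) : ℂ)) := by
            rw [hTc, hexp1, hexp2]
            ring
    rw [hre]
    have hnorm1 : ‖((((1 + s⁻¹)⁻¹ : ℝ) : ℂ) - 1)‖ = (s+1)⁻¹ := by
      have h1 : ((((1 + s⁻¹)⁻¹ : ℝ) : ℂ) - 1) = (((1 + s⁻¹)⁻¹ - 1 : ℝ) : ℂ) := by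
        push_cast
        ring
      have h2 : (1 + s⁻¹)⁻¹ - 1 = -(s+1)⁻¹ := by
        field_simp
        ring
      rw [h1, Complex.norm_real, Real.norm_eq_abs, h2, abs_neg,
        _root_.abs_of_nonneg (by positivity)]
    have hnorm2 : ‖Complex.exp (-((3/2*s^2*lam^2 : ℝ) : ℂ))‖ ≤ 1 := by
      rw [← Complex.ofReal_neg, Complex.norm_exp]
      simp only [Complex.ofReal_re]
      have := Real.exp_le_exp.mpr (show -(3/2*s^2*lam^2) ≤ 0 by nlinarith [sq_nonneg (s*lam)])
      simpa using this
    have hcs : (1 + s⁻¹)⁻¹ * s⁻¹ = (s+1)⁻¹ := by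
      field_simp
    have hPeb : ‖Pe‖ ≤ M := hMb lam hlam
    have hsp1 : (0:ℝ) < s + 1 := by linarith
    calc ‖((((1 + s⁻¹)⁻¹ : ℝ) : ℂ) - 1) * Pe +
          (((1 + s⁻¹)⁻¹ : ℝ) : ℂ) * ((s:ℂ))⁻¹ *
            Complex.exp (-((3/2*s^2*lam^2 : ℝ) : ℂ))‖
        ≤ ‖((((1 + s⁻¹)⁻¹ : ℝ) : ℂ) - 1) * Pe‖ +
          ‖(((1 + s⁻¹)⁻¹ : ℝ) : ℂ) * ((s:ℂ))⁻¹ *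
            Complex.exp (-((3/2*s^2*lam^2 : ℝ) : ℂ))‖ := norm_add_le _ _
      _ ≤ (s+1)⁻¹ * M + (s+1)⁻¹ * 1 := by
          gcongr
          · rw [norm_mul, hnorm1]
            exact mul_le_mul_of_nonneg_left hPeb (by positivity)
          · rw [norm_mul, norm_mul]
            have hA : ‖(((1 + s⁻¹)⁻¹ : ℝ) : ℂ)‖ = (1 + s⁻¹)⁻¹ := by
              rw [Complex.norm_real, Real.norm_eq_abs, _root_.abs_of_nonneg (by positivity)]
            have hB : ‖((s:ℂ))⁻¹‖ = s⁻¹ := by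
              rw [norm_inv, Complex.norm_real, Real.norm_eq_abs,
                _root_.abs_of_nonneg hs.le]
            rw [hA, hB]
            calc (1 + s⁻¹)⁻¹ * s⁻¹ * ‖Complex.exp (-((3/2*s^2*lam^2 : ℝ) : ℂ))‖
                ≤ (1 + s⁻¹)⁻¹ * s⁻¹ * 1 := by
                  exact mul_le_mul_of_nonneg_left hnorm2 (by positivity)
              _ = (s+1)⁻¹ * 1 := by rw [hcs]
      _ = (M + 1) / (s + 1) := by field_simp
      _ < ε := by
          rw [div_lt_iff₀ hsp1]
          have h1 : M + 1 ≤ s * ε := (div_le_iff₀ hε).mp hsM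
          nlinarith
end

section
/- If φ is the characteristic function of a random variable X in L^r with r ∈ (k+1, k+2), whose first k moments match those of a standard Gaussian, then as λ → 0, φ(λ) e^{λ²/2} = 1 + c_{k+1}(iλ)^{k+1}/(k+1)! + O(|λ|^r), where c_{k+1} = μ_{k+1} - γ_{k+1} with μ_{k+1} = E[X^{k+1}] and γ_{k+1} the (k+1)-th moment of the standard Gaussian. -/
/-! With `R_n(x) = e^{ix} - ∑_{j<n} (ix)^j/j!` one has `R_{n+1}' = i R_n`, so the mean value
inequality gives both `|R_{n+1}(x)| ≤ |x|^{n+1}` and `|R_{n+1}(x)| ≤ 2|x|^n`, hence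
`|R_{n+1}(x)| ≤ 2|x|^r` for `n ≤ r ≤ n+1`. Integrating this against the law of a variable with a
finite `r`-th moment, its characteristic function is its degree-`n` moment polynomial up to
`O(|λ|^r)`. For `X` and a standard Gaussian `γ` (with `n = k+1`) the matching moments cancel in
the difference, leaving `φ - φ_γ = c (iλ)^{k+1}/(k+1)! + O(|λ|^r)`; multiplying by
`e^{λ²/2} = 1/φ_γ(λ)` costs only `O(|λ|^{k+3})`. -/

open Complex MeasureTheory ProbabilityTheory Filter Asymptotics Finset
open scoped Nat Topology

noncomputable def expTaylorRem (n : ℕ) (x : ℝ) : ℂ :=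
  cexp (I * x) - ∑ j ∈ range n, (I * x) ^ j / j !

lemma expTaylorRem_succ_zero (n : ℕ) : expTaylorRem (n + 1) 0 = 0 := by
  simp [expTaylorRem, sum_range_succ']

lemma hasDerivAt_I_mul_pow_div_factorial (j : ℕ) (x : ℝ) :
    HasDerivAt (fun y : ℝ => (I * y) ^ (j + 1) / (j + 1)!) (I * ((I * x) ^ j / j !)) x := by
  refine ((((hasDerivAt_id x).ofReal_comp.const_mul I).pow (j + 1)).div_const _).congr_deriv ?_
  push_cast [Nat.factorial_succ]
  field_simp
  simp

lemma hasDerivAt_expTaylorRem_succ (n : ℕ) (x : ℝ) :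
    HasDerivAt (expTaylorRem (n + 1)) (I * expTaylorRem n x) x := by
  have hexp : HasDerivAt (fun y : ℝ => cexp (I * y)) (cexp (I * x) * I) x := by
    simpa using ((hasDerivAt_id x).ofReal_comp.const_mul I).cexp
  have hsum := (hasDerivAt_const x (1 : ℂ)).fun_add
    (HasDerivAt.fun_sum fun j (_ : j ∈ range n) => hasDerivAt_I_mul_pow_div_factorial j x)
  have hfun : expTaylorRem (n + 1) = fun y : ℝ => cexp (I * y) -
      (1 + ∑ j ∈ range n, (I * y) ^ (j + 1) / (j + 1)!) := by
    ext y
    simp [expTaylorRem, sum_range_succ', add_comm]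
  rw [hfun]
  refine (hexp.sub hsum).congr_deriv ?_
  simp only [expTaylorRem, mul_sub, mul_sum, zero_add, mul_comm]

lemma norm_expTaylorRem_succ_le {n m : ℕ} {C : ℝ} (h : ∀ t, ‖expTaylorRem n t‖ ≤ C * |t| ^ m)
    (x : ℝ) : ‖expTaylorRem (n + 1) x‖ ≤ C * |x| ^ (m + 1) := by
  have hC : 0 ≤ C := by simpa using (norm_nonneg _).trans (h 1)
  have hderiv : ∀ t ∈ Set.Icc (-|x|) |x|, ‖I * expTaylorRem n t‖ ≤ C * |x| ^ m := by
    intro t ht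
    rw [norm_mul, norm_I, one_mul]
    exact (h t).trans <| mul_le_mul_of_nonneg_left
      (pow_le_pow_left₀ (abs_nonneg t) (abs_le.2 ht) m) hC
  have hmvt := (convex_Icc (-|x|) |x|).norm_image_sub_le_of_norm_hasDerivWithin_le
    (fun t _ => (hasDerivAt_expTaylorRem_succ n t).hasDerivWithinAt) hderiv
    (x := 0) (y := x) (by simp) (by simp [neg_abs_le, le_abs_self])
  simpa [expTaylorRem_succ_zero, pow_succ, mul_assoc] using hmvt

lemma norm_expTaylorRem_le (n : ℕ) (x : ℝ) : ‖expTaylorRem n x‖ ≤ |x| ^ n := by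
  induction n generalizing x with
  | zero => simp [expTaylorRem, norm_exp_I_mul_ofReal]
  | succ n ih => simpa using norm_expTaylorRem_succ_le (C := 1) (by simpa using ih) x

lemma norm_expTaylorRem_succ_le_two (n : ℕ) (x : ℝ) :
    ‖expTaylorRem (n + 1) x‖ ≤ 2 * |x| ^ n := by
  induction n generalizing x with
  | zero =>
    simpa [expTaylorRem, norm_exp_I_mul_ofReal, one_add_one_eq_two] using
      norm_sub_le (cexp (I * x)) 1
  | succ n ih => exact norm_expTaylorRem_succ_le ih x

lemma norm_expTaylorRem_succ_le_rpow {n : ℕ} {r : ℝ} (hn : n ≤ r) (hr : r ≤ n + 1) (x : ℝ) :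
    ‖expTaylorRem (n + 1) x‖ ≤ 2 * |x| ^ r := by
  rcases le_total |x| 1 with hx | hx
  · calc ‖expTaylorRem (n + 1) x‖ ≤ |x| ^ (n + 1) := norm_expTaylorRem_le _ x
      _ ≤ |x| ^ r := by
        rw [← Real.rpow_natCast]
        exact Real.rpow_le_rpow_of_exponent_ge' (abs_nonneg x) hx
          ((Nat.cast_nonneg n).trans hn) (by push_cast; exact hr)
      _ ≤ 2 * |x| ^ r := le_mul_of_one_le_left (by positivity) one_le_two
  · calc ‖expTaylorRem (n + 1) x‖ ≤ 2 * |x| ^ n := norm_expTaylorRem_succ_le_two n x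
      _ ≤ 2 * |x| ^ r := by
        rw [← Real.rpow_natCast]
        gcongr

section Moments

variable {α : Type*} [MeasurableSpace α] {ν : Measure α} [IsFiniteMeasure ν] {Y : α → ℝ}

lemma MeasureTheory.MemLp.integrable_pow_of_le {r : ℝ} (hY : MemLp Y (ENNReal.ofReal r) ν)
    {j : ℕ} (hj : j ≤ r) : Integrable (fun a => Y a ^ j) ν := by
  have hYj : MemLp Y j ν := hY.mono_exponent (by simpa using ENNReal.ofReal_le_ofReal hj)
  exact hYj.integrable_norm_pow'.mono' (hY.aestronglyMeasurable.pow j)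
    (ae_of_all _ fun a => (norm_pow (Y a) j).le)

lemma integral_expTaylorRem_mul {n : ℕ} (hmeas : AEMeasurable Y ν)
    (hY : ∀ j < n, Integrable (fun a => Y a ^ j) ν) (t : ℝ) :
    ∫ a, expTaylorRem n (t * Y a) ∂ν = ∫ a, cexp (I * t * Y a) ∂ν -
      ∑ j ∈ range n, ((∫ a, Y a ^ j ∂ν : ℝ) : ℂ) * (I * t) ^ j / j ! := by
  have hexp : Integrable (fun a => cexp (I * t * Y a)) ν := by
    refine (integrable_const (1 : ℝ)).mono' (by fun_prop) (ae_of_all _ fun a => ?_)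
    rw [show I * t * Y a = ((t * Y a : ℝ) : ℂ) * I by push_cast; ring, norm_exp_ofReal_mul_I]
  have hterm (j : ℕ) (hj : j ∈ range n) :
      Integrable (fun a => ((Y a ^ j : ℝ) : ℂ) * ((I * t) ^ j / j !)) ν :=
    ((hY j (mem_range.1 hj)).ofReal).mul_const _
  have hpoint (a : α) : expTaylorRem n (t * Y a) =
      cexp (I * t * Y a) - ∑ j ∈ range n, ((Y a ^ j : ℝ) : ℂ) * ((I * t) ^ j / j !) := by
    simp only [expTaylorRem, ofReal_mul, ofReal_pow, mul_assoc, mul_pow, mul_div_assoc]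
    congr 1
    exact sum_congr rfl fun j _ => by ring
  simp_rw [hpoint]
  rw [integral_sub hexp (integrable_finsetSum _ hterm), integral_finsetSum _ hterm]
  congr 1
  refine sum_congr rfl fun j _ => ?_
  rw [integral_mul_const, integral_complex_ofReal, mul_div_assoc]

lemma norm_integral_cexp_sub_sum_moments_le {n : ℕ} {r : ℝ} (hn : n ≤ r) (hr : r ≤ n + 1)
    (hY : MemLp Y (ENNReal.ofReal r) ν) (t : ℝ) :
    ‖∫ a, cexp (I * t * Y a) ∂ν -
        ∑ j ∈ range (n + 1), ((∫ a, Y a ^ j ∂ν : ℝ) : ℂ) * (I * t) ^ j / (j ! : ℂ)‖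
      ≤ 2 * |t| ^ r * ∫ a, |Y a| ^ r ∂ν := by
  have hr₀ : 0 ≤ r := (Nat.cast_nonneg n).trans hn
  have hYr : Integrable (fun a => |Y a| ^ r) ν := by
    simpa [ENNReal.toReal_ofReal hr₀] using hY.integrable_norm_rpow'
  rw [← integral_expTaylorRem_mul hY.aestronglyMeasurable.aemeasurable
    fun j hj => hY.integrable_pow_of_le <| (Nat.cast_le.2 (Nat.le_of_lt_succ hj)).trans hn]
  rw [← integral_const_mul]
  refine norm_integral_le_of_norm_le (hYr.const_mul _) (ae_of_all _ fun a => ?_)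
  calc ‖expTaylorRem (n + 1) (t * Y a)‖ ≤ 2 * (|t * Y a| ^ r) :=
        norm_expTaylorRem_succ_le_rpow hn hr _
    _ = 2 * |t| ^ r * |Y a| ^ r := by
        rw [abs_mul, Real.mul_rpow (abs_nonneg t) (abs_nonneg _), mul_assoc]

end Moments

lemma isBigO_integral_cexp_sub_integral_cexp_sub_moment {α β : Type*} [MeasurableSpace α]
    [MeasurableSpace β] {ν : Measure α} {ν' : Measure β} [IsFiniteMeasure ν] [IsFiniteMeasure ν']
    {Y : α → ℝ} {Z : β → ℝ} {n : ℕ} {r : ℝ} (hn : n ≤ r) (hr : r ≤ n + 1)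
    (hY : MemLp Y (ENNReal.ofReal r) ν) (hZ : MemLp Z (ENNReal.ofReal r) ν')
    (hmom : ∀ j < n, ∫ a, Y a ^ j ∂ν = ∫ b, Z b ^ j ∂ν') :
    (fun t : ℝ => ∫ a, cexp (I * t * Y a) ∂ν - ∫ b, cexp (I * t * Z b) ∂ν'
        - ((∫ a, Y a ^ n ∂ν - ∫ b, Z b ^ n ∂ν' : ℝ) : ℂ) * (I * t) ^ n / (n ! : ℂ))
      =O[⊤] fun t => |t| ^ r := by
  have hsum (t : ℝ) :
      ∑ j ∈ range (n + 1), ((∫ a, Y a ^ j ∂ν : ℝ) : ℂ) * (I * t) ^ j / (j ! : ℂ) -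
        ∑ j ∈ range (n + 1), ((∫ b, Z b ^ j ∂ν' : ℝ) : ℂ) * (I * t) ^ j / (j ! : ℂ) =
      ((∫ a, Y a ^ n ∂ν - ∫ b, Z b ^ n ∂ν' : ℝ) : ℂ) * (I * t) ^ n / (n ! : ℂ) := by
    rw [← sum_sub_distrib, sum_range_succ,
      sum_eq_zero fun j hj => by rw [hmom j (mem_range.1 hj), sub_self]]
    push_cast
    ring
  refine IsBigO.of_bound (2 * ((∫ a, |Y a| ^ r ∂ν) + ∫ b, |Z b| ^ r ∂ν'))
    (Eventually.of_forall fun t => ?_)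
  rw [← hsum, Real.norm_of_nonneg (by positivity)]
  calc _ = ‖(∫ a, cexp (I * t * Y a) ∂ν -
          ∑ j ∈ range (n + 1), ((∫ a, Y a ^ j ∂ν : ℝ) : ℂ) * (I * t) ^ j / (j ! : ℂ)) -
        (∫ b, cexp (I * t * Z b) ∂ν' -
          ∑ j ∈ range (n + 1), ((∫ b, Z b ^ j ∂ν' : ℝ) : ℂ) * (I * t) ^ j / (j ! : ℂ))‖ := by
        congr 1
        ring
    _ ≤ 2 * |t| ^ r * (∫ a, |Y a| ^ r ∂ν) + 2 * |t| ^ r * ∫ b, |Z b| ^ r ∂ν' :=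
        (norm_sub_le _ _).trans (add_le_add
          (norm_integral_cexp_sub_sum_moments_le hn hr hY t)
          (norm_integral_cexp_sub_sum_moments_le hn hr hZ t))
    _ = _ := by ring

lemma isBigO_abs_pow_abs_rpow {m : ℕ} {r : ℝ} (hr : 0 ≤ r) (hrm : r ≤ m) :
    (fun x : ℝ => |x| ^ m) =O[𝓝 0] fun x => |x| ^ r := by
  refine IsBigO.of_bound 1 ?_
  filter_upwards [Metric.closedBall_mem_nhds (0 : ℝ) one_pos] with x hx
  rw [mem_closedBall_zero_iff, Real.norm_eq_abs] at hx
  rw [one_mul, Real.norm_of_nonneg (by positivity), Real.norm_of_nonneg (by positivity),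
    ← Real.rpow_natCast]
  exact Real.rpow_le_rpow_of_exponent_ge' (abs_nonneg x) hx hr hrm

lemma isBigO_cexp_sq_div_two_sub_one :
    (fun x : ℝ => cexp ((x ^ 2 / 2 : ℝ)) - 1) =O[𝓝 0] fun x => x ^ 2 := by
  refine IsBigO.of_bound 1 ?_
  filter_upwards [Metric.closedBall_mem_nhds (0 : ℝ) one_pos] with x hx
  rw [mem_closedBall_zero_iff, Real.norm_eq_abs] at hx
  have hx2 : x ^ 2 ≤ 1 := sq_le_one_iff_abs_le_one x |>.2 hx
  have hnorm : ‖((x ^ 2 / 2 : ℝ) : ℂ)‖ = x ^ 2 / 2 := by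
    rw [norm_real, Real.norm_of_nonneg (by positivity)]
  calc ‖cexp ((x ^ 2 / 2 : ℝ)) - 1‖ ≤ 2 * ‖((x ^ 2 / 2 : ℝ) : ℂ)‖ :=
        norm_exp_sub_one_le (by rw [hnorm]; linarith)
    _ = 1 * ‖x ^ 2‖ := by
        rw [hnorm, Real.norm_of_nonneg (by positivity)]
        ring

lemma integral_cexp_I_mul_gaussianReal_zero_one (t : ℝ) :
    ∫ x, cexp (I * t * x) ∂gaussianReal 0 1 = cexp (-(t ^ 2 / 2 : ℝ)) := by
  calc ∫ x, cexp (I * t * x) ∂gaussianReal 0 1 = charFun (gaussianReal 0 1) t := by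
        rw [charFun_apply_real]
        congr 1 with x
        ring_nf
    _ = cexp (-(t ^ 2 / 2 : ℝ)) := by
        rw [charFun_gaussianReal]
        push_cast
        ring_nf

theorem charFun_mod_gaussian_expansion_general
    {Ω : Type*} [MeasureSpace Ω] (μ : Measure Ω) [IsProbabilityMeasure μ]
    (k : ℕ) (r : ℝ) (hr : r ∈ Set.Ioo ((k : ℝ) + 1) ((k : ℝ) + 2))
    (X : Ω → ℝ) (hX : MemLp X (ENNReal.ofReal r) μ)
    (hmom : ∀ j ≤ k, ∫ ω, (X ω) ^ j ∂μ = ∫ x : ℝ, x ^ j ∂(gaussianReal 0 1)) :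
    (fun lam : ℝ =>
        (∫ ω, Complex.exp (Complex.I * lam * X ω) ∂μ) * Complex.exp ((lam ^ 2 / 2 : ℝ))
          - 1 - (((∫ ω, (X ω) ^ (k + 1) ∂μ) - ∫ x : ℝ, x ^ (k + 1) ∂(gaussianReal 0 1) : ℝ) : ℂ)
              * (Complex.I * lam) ^ (k + 1) / ((k + 1).factorial : ℂ))
      =O[nhds 0] fun lam : ℝ => |lam| ^ r := by
  obtain ⟨hr₁, hr₂⟩ := hr
  set c : ℝ := (∫ ω, X ω ^ (k + 1) ∂μ) - ∫ x : ℝ, x ^ (k + 1) ∂gaussianReal 0 1 with hc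
  have hD := isBigO_integral_cexp_sub_integral_cexp_sub_moment (n := k + 1) (Z := id)
    (by push_cast; linarith) (by push_cast; linarith) hX
    (memLp_id_gaussianReal' _ ENNReal.ofReal_ne_top)
    fun j hj => hmom j (Nat.lt_succ_iff.1 hj)
  have he : (fun lam : ℝ => cexp ((lam ^ 2 / 2 : ℝ))) =O[𝓝 0] fun _ => (1 : ℝ) :=
    (Continuous.tendsto (by fun_prop) 0).isBigO_one ℝ
  have hT : (fun lam : ℝ => (c : ℂ) * (I * lam) ^ (k + 1) / ((k + 1)! : ℂ))
      =O[𝓝 0] fun lam => |lam| ^ (k + 1) :=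
    IsBigO.of_bound (|c| / (k + 1)!) (Eventually.of_forall fun lam => by
      simpa using (div_mul_eq_mul_div _ _ _).ge)
  have hpow : (fun lam : ℝ => |lam| ^ (k + 1) * lam ^ 2) =O[𝓝 0] fun lam => |lam| ^ r :=
    (isBigO_abs_pow_abs_rpow (m := k + 3) (by linarith) (by push_cast; linarith)).congr_left
      fun lam => by rw [← sq_abs]; ring
  have hrem := (hT.mul isBigO_cexp_sq_div_two_sub_one).trans hpow
  -- As `e^{λ²/2} φ_γ(λ) = 1`, the function is `e^{λ²/2} D + T (e^{λ²/2} - 1)`,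
  -- with `D` and `T` the functions in `hD` and `hT`.
  refine ((he.mul (hD.mono le_top)).congr_right fun _ => one_mul _).add hrem
    |>.congr_left fun lam => ?_
  have hinv : cexp ((lam ^ 2 / 2 : ℝ)) * cexp (-(lam ^ 2 / 2 : ℝ)) = 1 := by
    rw [← exp_add, add_neg_cancel, exp_zero]
  simp only [id, integral_cexp_I_mul_gaussianReal_zero_one, ← hc]
  linear_combination -hinv

theorem charFun_mod_gaussian_expansion
    {Ω : Type*} [MeasureSpace Ω] (μ : Measure Ω) [IsProbabilityMeasure μ]
    (k : ℕ) (hk : 2 ≤ k) (r : ℝ) (hr : r ∈ Set.Ioo ((k : ℝ) + 1) ((k : ℝ) + 2))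
    (X : Ω → ℝ) (hX : MemLp X (ENNReal.ofReal r) μ)
    (hmom : ∀ j ≤ k, ∫ ω, (X ω) ^ j ∂μ = ∫ x : ℝ, x ^ j ∂(gaussianReal 0 1)) :
    (fun lam : ℝ =>
        (∫ ω, Complex.exp (Complex.I * lam * X ω) ∂μ) * Complex.exp ((lam ^ 2 / 2 : ℝ))
          - 1 - (((∫ ω, (X ω) ^ (k + 1) ∂μ) - ∫ x : ℝ, x ^ (k + 1) ∂(gaussianReal 0 1) : ℝ) : ℂ)
              * (Complex.I * lam) ^ (k + 1) / ((k + 1).factorial : ℂ))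
      =O[nhds 0] fun lam : ℝ => |lam| ^ r :=
  charFun_mod_gaussian_expansion_general μ k r hr X hX hmom
end

section
/- The Fourier transform of the Cauchy distribution with parameter γ > 0, i.e., the measure (γ/π)·dx/(γ² + x²), is λ ↦ e^{-γ|λ|}. -/
/-!
The Laplace density `e^{-γ|x|}` has Fourier transform `2γ / (γ² + (2πξ)²)`, obtained by
integrating two exponentials over the half-lines; this is `2π` times the Cauchy density at `2πξ`.
Both functions are integrable and the first is continuous, so Fourier inversion expresses
`e^{-γ|t|}` as an integral against the Cauchy density, which after the substitution `x = 2πξ` is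
its characteristic function at `t`.
-/

open MeasureTheory Complex Real Set ProbabilityTheory
open scoped FourierTransform NNReal

section Laplace

variable {γ : ℝ} {a : ℂ}

lemma exp_neg_mul_abs_add_mul_eqOn_Ioi :
    EqOn (fun x : ℝ => cexp (-γ * |x| + a * x)) (fun x => cexp ((a - γ) * x)) (Ioi 0) := by
  intro x hx
  simp only [abs_of_pos (mem_Ioi.1 hx)]
  ring_nf

lemma exp_neg_mul_abs_add_mul_eqOn_Iic :
    EqOn (fun x : ℝ => cexp (-γ * |x| + a * x)) (fun x => cexp ((a + γ) * x)) (Iic 0) := by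
  intro x hx
  simp only [abs_of_nonpos (mem_Iic.1 hx), ofReal_neg]
  ring_nf

lemma integrable_exp_neg_mul_abs_add_mul (h : |a.re| < γ) :
    Integrable (fun x : ℝ => cexp (-γ * |x| + a * x)) := by
  obtain ⟨hlt, hgt⟩ := abs_lt.1 h
  rw [← integrableOn_univ, ← Iic_union_Ioi (a := (0 : ℝ)), integrableOn_union]
  exact ⟨(integrableOn_exp_mul_complex_Iic (by simp; linarith) 0).congr_fun
      exp_neg_mul_abs_add_mul_eqOn_Iic.symm measurableSet_Iic,
    (integrableOn_exp_mul_complex_Ioi (by simp; linarith) 0).congr_fun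
      exp_neg_mul_abs_add_mul_eqOn_Ioi.symm measurableSet_Ioi⟩

lemma integral_exp_neg_mul_abs_add_mul (h : |a.re| < γ) :
    ∫ x : ℝ, cexp (-γ * |x| + a * x) = 2 * γ / (γ ^ 2 - a ^ 2) := by
  obtain ⟨hlt, hgt⟩ := abs_lt.1 h
  have hneg : (a - γ).re < 0 := by simp; linarith
  have hpos : 0 < (a + γ).re := by simp; linarith
  have hint := integrable_exp_neg_mul_abs_add_mul h
  rw [← intervalIntegral.integral_Iic_add_Ioi hint.integrableOn hint.integrableOn,
    setIntegral_congr_fun measurableSet_Iic exp_neg_mul_abs_add_mul_eqOn_Iic,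
    setIntegral_congr_fun measurableSet_Ioi exp_neg_mul_abs_add_mul_eqOn_Ioi,
    integral_exp_mul_complex_Iic hpos, integral_exp_mul_complex_Ioi hneg]
  have h₁ : a - γ ≠ 0 := fun h0 => by simp [h0] at hneg
  have h₂ : a + γ ≠ 0 := fun h0 => by simp [h0] at hpos
  have h₃ : (γ : ℂ) ^ 2 - a ^ 2 ≠ 0 := by
    rw [show (γ : ℂ) ^ 2 - a ^ 2 = -((a - γ) * (a + γ)) by ring]
    exact neg_ne_zero.2 (mul_ne_zero h₁ h₂)
  simp only [ofReal_zero, mul_zero, Complex.exp_zero]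
  field_simp
  ring

end Laplace

lemma fourier_exp_neg_mul_abs {γ : ℝ} (hγ : 0 < γ) (ξ : ℝ) :
    𝓕 (fun x : ℝ => cexp (-γ * |x|)) ξ = 2 * γ / (γ ^ 2 + (2 * π * ξ) ^ 2) := by
  have h : |(-(2 * π * ξ * I)).re| < γ := by simpa using hγ
  rw [Real.fourier_real_eq_integral_exp_smul]
  convert integral_exp_neg_mul_abs_add_mul h using 1
  · congr 1 with x
    rw [smul_eq_mul, ← Complex.exp_add]
    push_cast
    ring_nf
  · ring_nf
    rw [I_sq]
    ring

namespace ProbabilityTheory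

variable {γ : ℝ≥0}

lemma two_pi_mul_cauchyPDFReal_zero (hγ : γ ≠ 0) (x : ℝ) :
    2 * π * cauchyPDFReal 0 γ x = 2 * γ / (γ ^ 2 + x ^ 2) := by
  have : (0 : ℝ) < γ ^ 2 + x ^ 2 := by positivity
  rw [cauchyPDFReal_def, sub_zero]
  field_simp
  ring

lemma fourier_exp_neg_mul_abs_eq_cauchyPDFReal (hγ : γ ≠ 0) (ξ : ℝ) :
    𝓕 (fun x : ℝ => cexp (-γ * |x|)) ξ = (2 * π * cauchyPDFReal 0 γ (2 * π * ξ) : ℝ) := by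
  rw [fourier_exp_neg_mul_abs (NNReal.coe_pos.2 (pos_iff_ne_zero.2 hγ)),
    two_pi_mul_cauchyPDFReal_zero hγ]
  push_cast
  rfl

lemma integral_cauchyPDFReal_zero_smul_exp (hγ : γ ≠ 0) (t : ℝ) :
    ∫ x, cauchyPDFReal 0 γ x • cexp (t * x * I) = cexp (-γ * |t|) := by
  set f : ℝ → ℂ := fun x => cexp (-γ * |x|)
  have hf : Integrable f := by
    simpa [f] using integrable_exp_neg_mul_abs_add_mul (γ := γ) (a := 0)
      (by simpa using pos_iff_ne_zero.2 hγ)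
  have hπ : (2 * π : ℝ) ≠ 0 := by positivity
  have hFf : Integrable (𝓕 f) := by
    rw [funext (fourier_exp_neg_mul_abs_eq_cauchyPDFReal hγ)]
    exact (((integrable_cauchyPDFReal 0).comp_mul_left' hπ).const_mul _).ofReal
  have hinv := hf.fourierInv_fourier_eq hFf (v := t) (by fun_prop)
  rw [Real.fourierInv_eq'] at hinv
  set g : ℝ → ℂ := fun x => cauchyPDFReal 0 γ x • cexp (t * x * I)
  have hrescale (ξ : ℝ) :
      cexp (↑(2 * π * inner ℝ ξ t) * I) • 𝓕 f ξ = (2 * π : ℝ) • g (2 * π * ξ) := by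
    rw [fourier_exp_neg_mul_abs_eq_cauchyPDFReal hγ, Real.inner_apply]
    simp only [g, Complex.real_smul, smul_eq_mul]
    push_cast
    ring_nf
  calc ∫ x, g x = (2 * π : ℝ) • |(2 * π : ℝ)⁻¹| • ∫ x, g x := by
        rw [abs_of_pos (by positivity), smul_smul, mul_inv_cancel₀ hπ, one_smul]
    _ = ∫ ξ, (2 * π : ℝ) • g (2 * π * ξ) := by
        rw [integral_smul, Measure.integral_comp_mul_left]
    _ = f t := by simp_rw [← hrescale]; exact hinv

lemma charFun_cauchyMeasure (x₀ : ℝ) (γ : ℝ≥0) (t : ℝ) :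
    charFun (cauchyMeasure x₀ γ) t = cexp (t * x₀ * I - γ * |t|) := by
  rcases eq_or_ne γ 0 with rfl | hγ
  · simp [charFun_dirac, mul_comm]
  rw [charFun_apply_real, cauchyMeasure_of_scale_ne_zero x₀ hγ,
    integral_withDensity_eq_integral_toReal_smul (measurable_cauchyPDF x₀ γ)
      (ae_of_all _ fun _ => ENNReal.ofReal_lt_top),
    ← integral_add_right_eq_self _ x₀]
  have hshift (x : ℝ) : (cauchyPDF x₀ γ (x + x₀)).toReal • cexp (t * ↑(x + x₀) * I) =
      cauchyPDFReal 0 γ x • cexp (t * x * I) * cexp (t * x₀ * I) := by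
    rw [cauchyPDF_def, ENNReal.toReal_ofReal (cauchyPDF_pos x₀ hγ _).le, smul_mul_assoc,
      ← Complex.exp_add]
    simp only [cauchyPDFReal_def, add_sub_cancel_right, sub_zero]
    push_cast
    ring_nf
  simp_rw [hshift]
  rw [integral_mul_const, integral_cauchyPDFReal_zero_smul_exp hγ, ← Complex.exp_add]
  ring_nf

end ProbabilityTheory

theorem cauchy_fourier_transform (γ : ℝ) (hγ : 0 < γ) (lam : ℝ) :
    ∫ x : ℝ, Complex.exp (Complex.I * lam * x)
        ∂((volume : Measure ℝ).withDensity
            fun x => ENNReal.ofReal (γ / (Real.pi * (γ ^ 2 + x ^ 2)))) =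
      (Real.exp (-γ * |lam|) : ℝ) := by
  lift γ to ℝ≥0 using hγ.le
  have hγ' : γ ≠ 0 := by exact_mod_cast hγ.ne'
  have hμ : (volume : Measure ℝ).withDensity
      (fun x => ENNReal.ofReal (γ / (Real.pi * (γ ^ 2 + x ^ 2)))) = cauchyMeasure 0 γ := by
    rw [cauchyMeasure_of_scale_ne_zero 0 hγ']
    congr with x
    rw [cauchyPDF_def, cauchyPDFReal_def, sub_zero, add_comm, div_eq_mul_inv, mul_inv]
    ring_nf
  simp_rw [hμ, mul_comm I, mul_right_comm _ I, ← charFun_apply_real, charFun_cauchyMeasure]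
  push_cast
  ring_nf
end
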